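/- arXiv:1902.04114 — 9 statements merged into one kernel-verified Lean document; each statement's English description precedes it below -/
import Mathlib

section
/- If Z renders the average treatment effect identifiable via adjustment (i.e., Y(t) ⊥ T | Z and 0 < P(T=1|Z) < 1 a.s.), and λ(Z) is a function of Z such that the propensity score g(Z) = P(T=1|Z) is measurable with respect to σ(λ(Z)), then E[E[Y | λ(Z), T=1] − E[Y | λ(Z), T=0]] equals E[E[Y | Z, T=1] − E[Y | Z, T=0]]. -/
open MeasureTheory ProbabilityTheory

/-- If `Z` renders the ATE identifiable via adjustment (unconfoundedness of the
potential outcomes `(Y0, Y1)` with respect to `T` given `Z`, and positivity), and the propensity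
score `g ∘ Z` is measurable with respect to `σ(lam ∘ Z)`, then adjusting for `lam ∘ Z` gives the
same answer as adjusting for `Z`. Conditional expected outcomes are characterized by
`E[Y · 1{T=t} | ·] = Q t · P(T=t | ·)`. -/
theorem stmt0
    {Ω : Type*} [MeasurableSpace Ω] [StandardBorelSpace Ω]
    (μ : Measure Ω) [IsProbabilityMeasure μ]
    (Y Y0 Y1 T : Ω → ℝ) (Z : Ω → ℝ) (lam : ℝ → ℝ)
    (hY : Measurable Y) (hT : Measurable T) (hZ : Measurable Z) (hlam : Measurable lam)
    (hTbin : ∀ ω, T ω = 0 ∨ T ω = 1)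
    (hconsist : ∀ ω, Y ω = T ω * Y1 ω + (1 - T ω) * Y0 ω)
    -- unconfoundedness: (Y0, Y1) ⟂ T | Z
    (hunconf : CondIndepFun (MeasurableSpace.comap Z inferInstance) hZ.comap_le
      (fun ω => (Y0 ω, Y1 ω)) T μ)
    -- the propensity score g(Z) = P(T = 1 | Z)
    (g : ℝ → ℝ) (hg : Measurable g)
    (hgdef : (fun ω => g (Z ω)) =ᵐ[μ] μ[T | MeasurableSpace.comap Z inferInstance])
    -- positivity: 0 < P(T=1|Z) < 1 a.s.
    (hpos : ∀ᵐ ω ∂μ, 0 < g (Z ω) ∧ g (Z ω) < 1)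
    -- g(Z) is measurable with respect to σ(lam(Z))
    (hgmeas : Measurable[MeasurableSpace.comap (fun ω => lam (Z ω)) inferInstance]
      (fun ω => g (Z ω)))
    -- propensity given lam(Z)
    (gl : ℝ → ℝ) (hgl : Measurable gl)
    (hgldef : (fun ω => gl (lam (Z ω)))
      =ᵐ[μ] μ[T | MeasurableSpace.comap (fun ω => lam (Z ω)) inferInstance])
    -- conditional expected outcomes given Z: E[Y 1{T=t} | Z] = QZ t (Z) ⬝ P(T=t | Z)
    (QZ : ℝ → ℝ → ℝ) (hQZmeas : ∀ t, Measurable (QZ t))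
    (hQZ1 : μ[fun ω => (if T ω = 1 then (1:ℝ) else 0) * Y ω |
        MeasurableSpace.comap Z inferInstance] =ᵐ[μ] fun ω => QZ 1 (Z ω) * g (Z ω))
    (hQZ0 : μ[fun ω => (if T ω = 0 then (1:ℝ) else 0) * Y ω |
        MeasurableSpace.comap Z inferInstance] =ᵐ[μ] fun ω => QZ 0 (Z ω) * (1 - g (Z ω)))
    -- conditional expected outcomes given lam(Z)
    (QL : ℝ → ℝ → ℝ) (hQLmeas : ∀ t, Measurable (QL t))
    (hQL1 : μ[fun ω => (if T ω = 1 then (1:ℝ) else 0) * Y ω |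
        MeasurableSpace.comap (fun ω => lam (Z ω)) inferInstance]
      =ᵐ[μ] fun ω => QL 1 (lam (Z ω)) * gl (lam (Z ω)))
    (hQL0 : μ[fun ω => (if T ω = 0 then (1:ℝ) else 0) * Y ω |
        MeasurableSpace.comap (fun ω => lam (Z ω)) inferInstance]
      =ᵐ[μ] fun ω => QL 0 (lam (Z ω)) * (1 - gl (lam (Z ω))))
    -- integrability
    (hint : Integrable Y μ)
    (hintQZ : Integrable (fun ω => QZ 1 (Z ω) - QZ 0 (Z ω)) μ)
    (hintQL : Integrable (fun ω => QL 1 (lam (Z ω)) - QL 0 (lam (Z ω))) μ) :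
    ∫ ω, (QL 1 (lam (Z ω)) - QL 0 (lam (Z ω))) ∂μ
      = ∫ ω, (QZ 1 (Z ω) - QZ 0 (Z ω)) ∂μ := by
  classical
  have hmZ0 : MeasurableSpace.comap Z inferInstance ≤ _ := hZ.comap_le
  have hmL0 : MeasurableSpace.comap (fun ω => lam (Z ω)) inferInstance ≤ _ :=
    Measurable.comap_le (show Measurable fun ω => lam (Z ω) from hlam.comp hZ)
  have hmLZ : MeasurableSpace.comap (fun ω => lam (Z ω)) inferInstance
      ≤ MeasurableSpace.comap Z inferInstance := by
    rw [show (fun ω => lam (Z ω)) = lam ∘ Z from rfl, ← MeasurableSpace.comap_comp]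
    exact MeasurableSpace.comap_mono hlam.comap_le
  have hLmeas : Measurable[MeasurableSpace.comap (fun ω => lam (Z ω)) inferInstance]
      (fun ω => lam (Z ω)) := Measurable.of_comap_le le_rfl
  -- g(Z) is integrable
  have hgint : Integrable (fun ω => g (Z ω)) μ := integrable_condExp.congr hgdef.symm
  -- gl(lam Z) = g(Z) a.e.
  have hgleq : (fun ω => gl (lam (Z ω))) =ᵐ[μ] (fun ω => g (Z ω)) := by
    calc (fun ω => gl (lam (Z ω)))
        =ᵐ[μ] μ[T | MeasurableSpace.comap (fun ω => lam (Z ω)) inferInstance] := hgldef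
      _ =ᵐ[μ] μ[μ[T | MeasurableSpace.comap Z inferInstance] |
          MeasurableSpace.comap (fun ω => lam (Z ω)) inferInstance] :=
        (condExp_condExp_of_le hmLZ hmZ0).symm
      _ =ᵐ[μ] μ[(fun ω => g (Z ω)) |
          MeasurableSpace.comap (fun ω => lam (Z ω)) inferInstance] :=
        condExp_congr_ae hgdef.symm
      _ = fun ω => g (Z ω) :=
        condExp_of_stronglyMeasurable hmL0 hgmeas.stronglyMeasurable hgint
  -- indicator-times-Y functions
  have hI1meas : Measurable (fun ω => (if T ω = 1 then (1:ℝ) else 0) * Y ω) :=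
    (Measurable.ite (hT (measurableSet_singleton 1)) measurable_const
      measurable_const).mul hY
  have hI0meas : Measurable (fun ω => (if T ω = 0 then (1:ℝ) else 0) * Y ω) :=
    (Measurable.ite (hT (measurableSet_singleton 0)) measurable_const
      measurable_const).mul hY
  -- integrability of the products
  have hQZ1gint : Integrable (fun ω => QZ 1 (Z ω) * g (Z ω)) μ :=
    integrable_condExp.congr hQZ1
  have hQZ0gint : Integrable (fun ω => QZ 0 (Z ω) * (1 - g (Z ω))) μ :=
    integrable_condExp.congr hQZ0
  have hQL1gint : Integrable (fun ω => QL 1 (lam (Z ω)) * gl (lam (Z ω))) μ :=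
    integrable_condExp.congr hQL1
  have hQL0gint : Integrable (fun ω => QL 0 (lam (Z ω)) * (1 - gl (lam (Z ω)))) μ :=
    integrable_condExp.congr hQL0
  -- bounds for gl(lam Z)
  have hposL : ∀ᵐ ω ∂μ, 0 < gl (lam (Z ω)) ∧ gl (lam (Z ω)) < 1 := by
    filter_upwards [hpos, hgleq] with ω h1 h2
    rw [h2]; exact h1
  -- integrability of QZ 1 (Z ·), QZ 0 (Z ·)
  have hQZ1int : Integrable (fun ω => QZ 1 (Z ω)) μ := by
    have hC : Integrable (fun ω => (1 - g (Z ω)) * (QZ 1 (Z ω) - QZ 0 (Z ω))) μ := by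
      refine hintQZ.mono (((measurable_const.sub (hg.comp hZ)).mul
        (((hQZmeas 1).comp hZ).sub ((hQZmeas 0).comp hZ))).aestronglyMeasurable) ?_
      filter_upwards [hpos] with ω hω
      rw [Real.norm_eq_abs, Real.norm_eq_abs, abs_mul]
      have h1 : |1 - g (Z ω)| ≤ 1 := by rw [abs_le]; constructor <;> linarith [hω.1, hω.2]
      nlinarith [abs_nonneg (QZ 1 (Z ω) - QZ 0 (Z ω))]
    refine ((hQZ1gint.add hQZ0gint).add hC).congr
      (Filter.Eventually.of_forall fun ω => ?_)
    simp only [Pi.add_apply]; ring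
  have hQZ0int : Integrable (fun ω => QZ 0 (Z ω)) μ := by
    refine (hQZ1int.sub hintQZ).congr (Filter.Eventually.of_forall fun ω => ?_)
    simp only [Pi.sub_apply]; ring
  -- integrability of QL 1 (lam (Z ·)), QL 0 (lam (Z ·))
  have hQL1int : Integrable (fun ω => QL 1 (lam (Z ω))) μ := by
    have hC : Integrable
        (fun ω => (1 - gl (lam (Z ω))) * (QL 1 (lam (Z ω)) - QL 0 (lam (Z ω)))) μ := by
      refine hintQL.mono (((measurable_const.sub (hgl.comp (hlam.comp hZ))).mul
        (((hQLmeas 1).comp (hlam.comp hZ)).sub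
          ((hQLmeas 0).comp (hlam.comp hZ)))).aestronglyMeasurable) ?_
      filter_upwards [hposL] with ω hω
      rw [Real.norm_eq_abs, Real.norm_eq_abs, abs_mul]
      have h1 : |1 - gl (lam (Z ω))| ≤ 1 := by
        rw [abs_le]; constructor <;> linarith [hω.1, hω.2]
      nlinarith [abs_nonneg (QL 1 (lam (Z ω)) - QL 0 (lam (Z ω)))]
    refine ((hQL1gint.add hQL0gint).add hC).congr
      (Filter.Eventually.of_forall fun ω => ?_)
    simp only [Pi.add_apply]; ring
  have hQL0int : Integrable (fun ω => QL 0 (lam (Z ω))) μ := by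
    refine (hQL1int.sub hintQL).congr (Filter.Eventually.of_forall fun ω => ?_)
    simp only [Pi.sub_apply]; ring
  -- pull-out identities
  have hpull1 : μ[(fun ω => (if T ω = 1 then (1:ℝ) else 0) * Y ω) |
        MeasurableSpace.comap (fun ω => lam (Z ω)) inferInstance] =ᵐ[μ]
      fun ω => g (Z ω) * (μ[(fun ω' => QZ 1 (Z ω')) |
        MeasurableSpace.comap (fun ω => lam (Z ω)) inferInstance]) ω := by
    have e1 := (condExp_condExp_of_le (μ := μ) hmLZ hmZ0
      (f := fun ω => (if T ω = 1 then (1:ℝ) else 0) * Y ω)).symm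
    have e2 := condExp_congr_ae (μ := μ)
      (m := MeasurableSpace.comap (fun ω => lam (Z ω)) inferInstance)
      (hQZ1.trans (Filter.Eventually.of_forall (fun ω =>
        show QZ 1 (Z ω) * g (Z ω)
          = ((fun ω => g (Z ω)) * fun ω => QZ 1 (Z ω)) ω by
        simp [mul_comm])))
    have e3 := condExp_mul_of_stronglyMeasurable_left (μ := μ) hgmeas.stronglyMeasurable
      (hQZ1gint.congr (Filter.Eventually.of_forall (fun ω => by
        show QZ 1 (Z ω) * g (Z ω) = ((fun ω => g (Z ω)) * fun ω => QZ 1 (Z ω)) ω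
        simp [mul_comm]))) hQZ1int
    exact (e1.trans e2).trans e3
  have hpull0 : μ[(fun ω => (if T ω = 0 then (1:ℝ) else 0) * Y ω) |
        MeasurableSpace.comap (fun ω => lam (Z ω)) inferInstance] =ᵐ[μ]
      fun ω => (1 - g (Z ω)) * (μ[(fun ω' => QZ 0 (Z ω')) |
        MeasurableSpace.comap (fun ω => lam (Z ω)) inferInstance]) ω := by
    have e1 := (condExp_condExp_of_le (μ := μ) hmLZ hmZ0
      (f := fun ω => (if T ω = 0 then (1:ℝ) else 0) * Y ω)).symm
    have e2 := condExp_congr_ae (μ := μ)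
      (m := MeasurableSpace.comap (fun ω => lam (Z ω)) inferInstance)
      (hQZ0.trans (Filter.Eventually.of_forall (fun ω =>
        show QZ 0 (Z ω) * (1 - g (Z ω))
          = ((fun ω => 1 - g (Z ω)) * fun ω => QZ 0 (Z ω)) ω by
        simp [mul_comm])))
    have e3 := condExp_mul_of_stronglyMeasurable_left (μ := μ)
      (stronglyMeasurable_const.sub hgmeas.stronglyMeasurable)
      (hQZ0gint.congr (Filter.Eventually.of_forall (fun ω => by
        show QZ 0 (Z ω) * (1 - g (Z ω)) = ((fun ω => 1 - g (Z ω)) * fun ω => QZ 0 (Z ω)) ω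
        simp [mul_comm]))) hQZ0int
    exact (e1.trans e2).trans e3
  -- key a.e. identities
  have key1 : (fun ω => QL 1 (lam (Z ω))) =ᵐ[μ] μ[(fun ω => QZ 1 (Z ω)) |
      MeasurableSpace.comap (fun ω => lam (Z ω)) inferInstance] := by
    filter_upwards [hQL1, hpull1, hgleq, hpos] with ω h1 h2 h3 h4
    have hne : g (Z ω) ≠ 0 := ne_of_gt h4.1
    have h := h1.symm.trans h2
    rw [h3] at h
    exact mul_right_cancel₀ hne (h.trans (mul_comm _ _))
  have key0 : (fun ω => QL 0 (lam (Z ω))) =ᵐ[μ] μ[(fun ω => QZ 0 (Z ω)) |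
      MeasurableSpace.comap (fun ω => lam (Z ω)) inferInstance] := by
    filter_upwards [hQL0, hpull0, hgleq, hpos] with ω h1 h2 h3 h4
    have hne : (1 : ℝ) - g (Z ω) ≠ 0 := by
      have := h4.2; intro h; apply absurd h4.2; linarith
    have h := h1.symm.trans h2
    rw [h3] at h
    exact mul_right_cancel₀ hne (h.trans (mul_comm _ _))
  -- conclude via integrals
  have i1 : ∫ ω, QL 1 (lam (Z ω)) ∂μ = ∫ ω, QZ 1 (Z ω) ∂μ := by
    rw [integral_congr_ae key1]
    exact integral_condExp hmL0
  have i0 : ∫ ω, QL 0 (lam (Z ω)) ∂μ = ∫ ω, QZ 0 (Z ω) ∂μ := by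
    rw [integral_congr_ae key0]
    exact integral_condExp hmL0
  calc ∫ ω, (QL 1 (lam (Z ω)) - QL 0 (lam (Z ω))) ∂μ
      = ∫ ω, QL 1 (lam (Z ω)) ∂μ - ∫ ω, QL 0 (lam (Z ω)) ∂μ :=
        integral_sub hQL1int hQL0int
    _ = ∫ ω, QZ 1 (Z ω) ∂μ - ∫ ω, QZ 0 (Z ω) ∂μ := by rw [i1, i0]
    _ = ∫ ω, (QZ 1 (Z ω) - QZ 0 (Z ω)) ∂μ := (integral_sub hQZ1int hQZ0int).symm
end

section
/- If Z renders the average treatment effect identifiable via adjustment, and λ(Z) is such that both conditional expected outcomes Q(0,Z) = E[Y|T=0,Z] and Q(1,Z) = E[Y|T=1,Z] are σ(λ(Z))-measurable, then adjusting for λ(Z) alone suffices: E[E[Y | λ(Z), T=1] − E[Y | λ(Z), T=0]] = E[Q(1,Z) − Q(0,Z)]. -/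
/-!
Since `σ(λ(Z)) ⊆ σ(Z)`, the tower property and pulling out the `σ(λ(Z))`-measurable factor
`Q(t, Z)` give `E[Y 1{T=t} | λ(Z)] = Q(t, Z) · P(T=t | λ(Z))`. By definition of the outcome
regression given `λ(Z)` this is also `Q_λ(t, λ(Z)) · P(T=t | λ(Z))`, and positivity given `Z`
passes to `λ(Z)`, so the factor `P(T=t | λ(Z))` cancels: `Q_λ(t, λ(Z)) = Q(t, Z)` almost surely,
and the two adjusted effects agree.
-/

open MeasureTheory ProbabilityTheory Filter Function

section

variable {Ω : Type*} {m m₁ m₂ m₀ : MeasurableSpace Ω} {μ : Measure Ω}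

theorem condExp_pos (hm : m ≤ m₀) [SigmaFinite (μ.trim hm)] {f : Ω → ℝ}
    (hf_int : Integrable f μ) (hf : ∀ᵐ ω ∂μ, 0 < f ω) : ∀ᵐ ω ∂μ, 0 < μ[f|m] ω := by
  set s := {ω | μ[f|m] ω ≤ 0}
  have hs : MeasurableSet[m] s := measurableSet_le stronglyMeasurable_condExp.measurable
    measurable_const
  have h_int_nonpos : ∫ ω in s, f ω ∂μ ≤ 0 := by
    rw [← setIntegral_condExp hm hf_int hs]
    exact setIntegral_nonpos (hm s hs) fun _ hω => hω
  have h_support_null : μ (support f)ᶜ = 0 := mem_ae_iff.1 (hf.mono fun _ h => h.ne')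
  have hs_null : μ s = 0 := by
    rw [← measure_inter_conull h_support_null, ← nonpos_iff_eq_zero, ← not_lt, Set.inter_comm,
      ← setIntegral_pos_iff_support_of_nonneg_ae (ae_restrict_of_ae (hf.mono fun _ h => h.le))
        hf_int.integrableOn]
    exact h_int_nonpos.not_gt
  filter_upwards [measure_eq_zero_iff_ae_notMem.1 hs_null] with ω hω using lt_of_not_ge hω

theorem ae_eq_of_condExp_eq_mul (h₁₂ : m₁ ≤ m₂) (h₂ : m₂ ≤ m₀)
    [SigmaFinite (μ.trim (h₁₂.trans h₂))] {X p q q' r : Ω → ℝ} (hq : StronglyMeasurable[m₁] q)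
    (hp_int : Integrable p μ) (hp_pos : ∀ᵐ ω ∂μ, 0 < p ω)
    (h₂X : μ[X|m₂] =ᵐ[μ] q * p) (hr : μ[p|m₁] =ᵐ[μ] r) (h₁X : μ[X|m₁] =ᵐ[μ] q' * r) :
    q' =ᵐ[μ] q := by
  have : SigmaFinite (μ.trim h₂) := sigmaFiniteTrim_mono h₂ h₁₂
  have hr_pos : ∀ᵐ ω ∂μ, 0 < r ω := by
    filter_upwards [condExp_pos (h₁₂.trans h₂) hp_int hp_pos, hr] with ω hω hrω
    rwa [← hrω]
  have hX : μ[X|m₁] =ᵐ[μ] q * r :=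
    calc μ[X|m₁] =ᵐ[μ] μ[μ[X|m₂]|m₁] := (condExp_condExp_of_le h₁₂ h₂).symm
      _ =ᵐ[μ] μ[q * p|m₁] := condExp_congr_ae h₂X
      _ =ᵐ[μ] q * μ[p|m₁] :=
        condExp_mul_of_stronglyMeasurable_left hq (integrable_condExp.congr h₂X) hp_int
      _ =ᵐ[μ] q * r := EventuallyEq.rfl.mul hr
  filter_upwards [h₁X.symm.trans hX, hr_pos] with ω hω hrω using mul_right_cancel₀ hrω.ne' hω

end

theorem stmt1_general
    {Ω : Type*} [MeasurableSpace Ω]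
    (μ : Measure Ω) [IsProbabilityMeasure μ]
    (Y T : Ω → ℝ) (Z : Ω → ℝ) (lam : ℝ → ℝ)
    (hZ : Measurable Z) (hlam : Measurable lam)
    -- conditional expected outcome functions QZ t
    (QZ : ℝ → ℝ → ℝ)
    -- the propensity score g(Z) = P(T = 1 | Z)
    (g : ℝ → ℝ)
    (hgdef : (fun ω => g (Z ω)) =ᵐ[μ] μ[T | MeasurableSpace.comap Z inferInstance])
    -- positivity: 0 < P(T=1|Z) < 1 a.s.
    (hpos : ∀ᵐ ω ∂μ, 0 < g (Z ω) ∧ g (Z ω) < 1)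
    -- both conditional expected outcomes Q(t,Z) are measurable with respect to σ(lam(Z))
    (hQmeasL : ∀ t, t = 0 ∨ t = 1 →
      Measurable[MeasurableSpace.comap (fun ω => lam (Z ω)) inferInstance]
        (fun ω => QZ t (Z ω)))
    -- propensity given lam(Z)
    (gl : ℝ → ℝ)
    (hgldef : (fun ω => gl (lam (Z ω)))
      =ᵐ[μ] μ[T | MeasurableSpace.comap (fun ω => lam (Z ω)) inferInstance])
    -- conditional expected outcomes given Z: E[Y 1{T=t} | Z] = QZ t (Z) ⬝ P(T=t | Z)
    (hQZ1 : μ[fun ω => (if T ω = 1 then (1:ℝ) else 0) * Y ω |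
        MeasurableSpace.comap Z inferInstance] =ᵐ[μ] fun ω => QZ 1 (Z ω) * g (Z ω))
    (hQZ0 : μ[fun ω => (if T ω = 0 then (1:ℝ) else 0) * Y ω |
        MeasurableSpace.comap Z inferInstance] =ᵐ[μ] fun ω => QZ 0 (Z ω) * (1 - g (Z ω)))
    -- conditional expected outcomes given lam(Z)
    (QL : ℝ → ℝ → ℝ)
    (hQL1 : μ[fun ω => (if T ω = 1 then (1:ℝ) else 0) * Y ω |
        MeasurableSpace.comap (fun ω => lam (Z ω)) inferInstance]
      =ᵐ[μ] fun ω => QL 1 (lam (Z ω)) * gl (lam (Z ω)))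
    (hQL0 : μ[fun ω => (if T ω = 0 then (1:ℝ) else 0) * Y ω |
        MeasurableSpace.comap (fun ω => lam (Z ω)) inferInstance]
      =ᵐ[μ] fun ω => QL 0 (lam (Z ω)) * (1 - gl (lam (Z ω)))) :
    ∫ ω, (QL 1 (lam (Z ω)) - QL 0 (lam (Z ω))) ∂μ
      = ∫ ω, (QZ 1 (Z ω) - QZ 0 (Z ω)) ∂μ := by
  set mZ : MeasurableSpace Ω := MeasurableSpace.comap Z inferInstance
  set mL : MeasurableSpace Ω := MeasurableSpace.comap (fun ω => lam (Z ω)) inferInstance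
  have hmZ : mZ ≤ _ := hZ.comap_le
  have hLZ : mL ≤ mZ := (hlam.comp (comap_measurable Z)).comap_le
  have hg_int : Integrable (fun ω => g (Z ω)) μ := integrable_condExp.congr hgdef.symm
  have hgL : μ[fun ω => g (Z ω)|mL] =ᵐ[μ] fun ω => gl (lam (Z ω)) :=
    (condExp_congr_ae hgdef).trans ((condExp_condExp_of_le hLZ hmZ).trans hgldef.symm)
  have hgL_one_sub : μ[fun ω => 1 - g (Z ω)|mL] =ᵐ[μ] fun ω => 1 - gl (lam (Z ω)) := by
    refine (condExp_sub (integrable_const 1) hg_int mL).trans ?_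
    rw [condExp_const (hLZ.trans hmZ)]
    exact EventuallyEq.rfl.sub hgL
  have h₁ := ae_eq_of_condExp_eq_mul hLZ hmZ (hQmeasL 1 (.inr rfl)).stronglyMeasurable hg_int
    (hpos.mono fun _ h => h.1) hQZ1 hgL hQL1
  have h₀ := ae_eq_of_condExp_eq_mul hLZ hmZ (hQmeasL 0 (.inl rfl)).stronglyMeasurable
    ((integrable_const 1).sub hg_int) (hpos.mono fun _ h => sub_pos.2 h.2) hQZ0 hgL_one_sub hQL0
  exact integral_congr_ae (h₁.sub h₀)

/-- If `Z` renders the ATE identifiable via adjustment (unconfoundedness of the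
potential outcomes `(Y0, Y1)` with respect to `T` given `Z`, and positivity), and the propensity
score `g ∘ Z` is measurable with respect to `σ(lam ∘ Z)`, then adjusting for `lam ∘ Z` gives the
same answer as adjusting for `Z`. Conditional expected outcomes are characterized by
`E[Y · 1{T=t} | ·] = Q t · P(T=t | ·)`. -/
theorem stmt1
    {Ω : Type*} [MeasurableSpace Ω] [StandardBorelSpace Ω]
    (μ : Measure Ω) [IsProbabilityMeasure μ]
    (Y Y0 Y1 T : Ω → ℝ) (Z : Ω → ℝ) (lam : ℝ → ℝ)
    (hY : Measurable Y) (hT : Measurable T) (hZ : Measurable Z) (hlam : Measurable lam)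
    (hTbin : ∀ ω, T ω = 0 ∨ T ω = 1)
    (hconsist : ∀ ω, Y ω = T ω * Y1 ω + (1 - T ω) * Y0 ω)
    -- unconfoundedness: (Y0, Y1) ⟂ T | Z
    (hunconf : CondIndepFun (MeasurableSpace.comap Z inferInstance) hZ.comap_le
      (fun ω => (Y0 ω, Y1 ω)) T μ)
    -- conditional expected outcome functions QZ t
    (QZ : ℝ → ℝ → ℝ) (hQZmeas : ∀ t, Measurable (QZ t))
    -- the propensity score g(Z) = P(T = 1 | Z)
    (g : ℝ → ℝ) (hg : Measurable g)
    (hgdef : (fun ω => g (Z ω)) =ᵐ[μ] μ[T | MeasurableSpace.comap Z inferInstance])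
    -- positivity: 0 < P(T=1|Z) < 1 a.s.
    (hpos : ∀ᵐ ω ∂μ, 0 < g (Z ω) ∧ g (Z ω) < 1)
    -- both conditional expected outcomes Q(t,Z) are measurable with respect to σ(lam(Z))
    (hQmeasL : ∀ t, t = 0 ∨ t = 1 →
      Measurable[MeasurableSpace.comap (fun ω => lam (Z ω)) inferInstance]
        (fun ω => QZ t (Z ω)))
    -- propensity given lam(Z)
    (gl : ℝ → ℝ) (hgl : Measurable gl)
    (hgldef : (fun ω => gl (lam (Z ω)))
      =ᵐ[μ] μ[T | MeasurableSpace.comap (fun ω => lam (Z ω)) inferInstance])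
    -- conditional expected outcomes given Z: E[Y 1{T=t} | Z] = QZ t (Z) ⬝ P(T=t | Z)
    (hQZ1 : μ[fun ω => (if T ω = 1 then (1:ℝ) else 0) * Y ω |
        MeasurableSpace.comap Z inferInstance] =ᵐ[μ] fun ω => QZ 1 (Z ω) * g (Z ω))
    (hQZ0 : μ[fun ω => (if T ω = 0 then (1:ℝ) else 0) * Y ω |
        MeasurableSpace.comap Z inferInstance] =ᵐ[μ] fun ω => QZ 0 (Z ω) * (1 - g (Z ω)))
    -- conditional expected outcomes given lam(Z)
    (QL : ℝ → ℝ → ℝ) (hQLmeas : ∀ t, Measurable (QL t))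
    (hQL1 : μ[fun ω => (if T ω = 1 then (1:ℝ) else 0) * Y ω |
        MeasurableSpace.comap (fun ω => lam (Z ω)) inferInstance]
      =ᵐ[μ] fun ω => QL 1 (lam (Z ω)) * gl (lam (Z ω)))
    (hQL0 : μ[fun ω => (if T ω = 0 then (1:ℝ) else 0) * Y ω |
        MeasurableSpace.comap (fun ω => lam (Z ω)) inferInstance]
      =ᵐ[μ] fun ω => QL 0 (lam (Z ω)) * (1 - gl (lam (Z ω))))
    -- integrability
    (hint : Integrable Y μ)
    (hintQZ : Integrable (fun ω => QZ 1 (Z ω) - QZ 0 (Z ω)) μ)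
    (hintQL : Integrable (fun ω => QL 1 (lam (Z ω)) - QL 0 (lam (Z ω))) μ) :
    ∫ ω, (QL 1 (lam (Z ω)) - QL 0 (lam (Z ω))) ∂μ
      = ∫ ω, (QZ 1 (Z ω) - QZ 0 (Z ω)) ∂μ :=
  stmt1_general μ Y T Z lam hZ hlam QZ g hgdef hpos hQmeasL gl hgldef hQZ1 hQZ0 QL hQL1 hQL0
end

section
/- Double robustness of the A-IPTW score: if either Q̃ = Q (the true conditional outcome) or g̃ = g (the true propensity score), then E[(T/g̃(Z))(Y − Q̃(1,Z)) − ((1−T)/(1−g̃(Z)))(Y − Q̃(0,Z)) + Q̃(1,Z) − Q̃(0,Z)] = E[Q(1,Z) − Q(0,Z)], provided ε ≤ g̃(Z) ≤ 1−ε almost surely. -/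
/-!
Conditioning on `σ(Z)`, the weights `1/g̃(Z)`, `1/(1-g̃(Z))` and the outcome models `Q̃(t,Z)`
pull out, and `E[T(Y - Q̃(1,Z)) | Z] = g(Z)(Q(1,Z) - Q̃(1,Z))`. Hence the conditional mean of the
score is `(g/g̃)(Q(1,·) - Q̃(1,·)) - ((1-g)/(1-g̃))(Q(0,·) - Q̃(0,·)) + Q̃(1,·) - Q̃(0,·)` at `Z`,
which equals `Q(1,Z) - Q(0,Z)` as soon as `Q̃ = Q` (the residual terms vanish) or `g̃ = g`
(the ratios are `1`).
-/

open MeasureTheory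

section

variable {Ω : Type*} {m m₀ : MeasurableSpace Ω} {μ : Measure Ω} [IsFiniteMeasure μ]

theorem condExp_one_sub_of_ae_eq (hm : m ≤ m₀) {A p : Ω → ℝ} (hA : Integrable A μ)
    (hp : μ[A | m] =ᵐ[μ] p) : μ[1 - A | m] =ᵐ[μ] 1 - p := by
  filter_upwards [condExp_sub (integrable_const 1) hA m, hp] with ω h hω
  rw [condExp_const hm] at h
  rw [Pi.sub_apply, ← hω]
  exact h

theorem condExp_weight_mul_residual (hm : m ≤ m₀) {φ A Y q p R : Ω → ℝ} {C : ℝ}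
    (hφ : StronglyMeasurable[m] φ) (hφC : ∀ᵐ ω ∂μ, ‖φ ω‖ ≤ C)
    (hq : StronglyMeasurable[m] q) (hqi : Integrable q μ)
    (hA : AEStronglyMeasurable A μ) (hA1 : ∀ᵐ ω ∂μ, ‖A ω‖ ≤ 1) (hY : Integrable Y μ)
    (hp : μ[A | m] =ᵐ[μ] p) (hR : μ[A * Y | m] =ᵐ[μ] R * p) :
    μ[φ * (A * (Y - q)) | m] =ᵐ[μ] φ * (p * (R - q)) := by
  have hAi : Integrable A μ := .of_bound hA 1 hA1
  have hAY : Integrable (A * Y) μ := hY.bdd_mul hA hA1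
  have hAq : Integrable (A * q) μ := hqi.bdd_mul hA hA1
  calc μ[φ * (A * (Y - q)) | m] =ᵐ[μ] φ * μ[A * Y - A * q | m] := by
        rw [mul_sub]
        exact condExp_stronglyMeasurable_mul_of_bound hm hφ (hAY.sub hAq) C hφC
    _ =ᵐ[μ] φ * (p * (R - q)) := by
        filter_upwards [condExp_sub hAY hAq m, hR,
          condExp_mul_of_stronglyMeasurable_right hq hAq hAi, hp] with ω h1 h2 h3 h4
        simp only [Pi.mul_apply, Pi.sub_apply, h1, h2, h3, h4]
        ring

theorem condExp_aipw_score (hm : m ≤ m₀) {T Y e p R₁ R₀ q₁ q₀ : Ω → ℝ} {ε : ℝ} (hε : 0 < ε)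
    (hT : AEStronglyMeasurable T μ) (hT01 : ∀ᵐ ω ∂μ, 0 ≤ T ω ∧ T ω ≤ 1) (hY : Integrable Y μ)
    (he : StronglyMeasurable[m] e) (heε : ∀ᵐ ω ∂μ, ε ≤ e ω ∧ e ω ≤ 1 - ε)
    (hq₁ : StronglyMeasurable[m] q₁) (hq₁i : Integrable q₁ μ)
    (hq₀ : StronglyMeasurable[m] q₀) (hq₀i : Integrable q₀ μ)
    (hp : μ[T | m] =ᵐ[μ] p) (hR₁ : μ[T * Y | m] =ᵐ[μ] R₁ * p)
    (hR₀ : μ[(1 - T) * Y | m] =ᵐ[μ] R₀ * (1 - p)) :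
    μ[fun ω => T ω / e ω * (Y ω - q₁ ω) - (1 - T ω) / (1 - e ω) * (Y ω - q₀ ω)
        + (q₁ ω - q₀ ω) | m]
      =ᵐ[μ] fun ω => (e ω)⁻¹ * (p ω * (R₁ ω - q₁ ω))
        - (1 - e ω)⁻¹ * ((1 - p ω) * (R₀ ω - q₀ ω)) + (q₁ ω - q₀ ω) := by
  have norm_inv_le {x : ℝ} (hx : ε ≤ x) : ‖x⁻¹‖ ≤ ε⁻¹ := by
    rw [norm_inv, Real.norm_of_nonneg (hε.le.trans hx)]
    exact inv_anti₀ hε hx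
  have he₁ : ∀ᵐ ω ∂μ, ‖(e ω)⁻¹‖ ≤ ε⁻¹ := heε.mono fun ω h => norm_inv_le h.1
  have he₀ : ∀ᵐ ω ∂μ, ‖(1 - e ω)⁻¹‖ ≤ ε⁻¹ := heε.mono fun ω h => norm_inv_le (by linarith [h.2])
  have hT₁ : ∀ᵐ ω ∂μ, ‖T ω‖ ≤ 1 := hT01.mono fun ω h => by
    rw [Real.norm_eq_abs, abs_le]; constructor <;> linarith [h.1, h.2]
  have hT₀ : ∀ᵐ ω ∂μ, ‖(1 - T) ω‖ ≤ 1 := hT01.mono fun ω h => by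
    rw [Pi.sub_apply, Pi.one_apply, Real.norm_eq_abs, abs_le]; constructor <;> linarith [h.1, h.2]
  have hT' : AEStronglyMeasurable (1 - T) μ := aestronglyMeasurable_const.sub hT
  have hsm₁ : StronglyMeasurable[m] e⁻¹ := he.measurable.inv.stronglyMeasurable
  have hsm₀ : StronglyMeasurable[m] (1 - e)⁻¹ :=
    (measurable_const.sub he.measurable).inv.stronglyMeasurable
  have arm₁ := condExp_weight_mul_residual hm hsm₁ he₁ hq₁ hq₁i hT hT₁ hY hp hR₁
  have arm₀ := condExp_weight_mul_residual hm hsm₀ he₀ hq₀ hq₀i hT' hT₀ hY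
    (condExp_one_sub_of_ae_eq hm (.of_bound hT 1 hT₁) hp) hR₀
  have int₁ : Integrable (e⁻¹ * (T * (Y - q₁))) μ :=
    ((hY.sub hq₁i).bdd_mul hT hT₁).bdd_mul (hsm₁.mono hm).aestronglyMeasurable he₁
  have int₀ : Integrable ((1 - e)⁻¹ * ((1 - T) * (Y - q₀))) μ :=
    ((hY.sub hq₀i).bdd_mul hT' hT₀).bdd_mul (hsm₀.mono hm).aestronglyMeasurable he₀
  have hscore : (fun ω => T ω / e ω * (Y ω - q₁ ω) - (1 - T ω) / (1 - e ω) * (Y ω - q₀ ω)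
      + (q₁ ω - q₀ ω)) = e⁻¹ * (T * (Y - q₁)) - (1 - e)⁻¹ * ((1 - T) * (Y - q₀)) + (q₁ - q₀) := by
    funext ω
    simp only [Pi.add_apply, Pi.sub_apply, Pi.mul_apply, Pi.inv_apply, Pi.one_apply]
    ring
  rw [hscore]
  filter_upwards [condExp_add (int₁.sub int₀) (hq₁i.sub hq₀i) m, condExp_sub int₁ int₀ m, arm₁,
    arm₀, (condExp_of_stronglyMeasurable hm (hq₁.sub hq₀) (hq₁i.sub hq₀i)).eventuallyEq]
    with ω h h' h₁ h₀ hq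
  simp only [h, h', h₁, h₀, hq, Pi.add_apply, Pi.sub_apply, Pi.mul_apply, Pi.inv_apply,
    Pi.one_apply]

end

theorem aipw_eq_of_double_robust {g g' R₁ R₀ q₁ q₀ : ℝ} (hg' : g' ≠ 0) (hg'₁ : 1 - g' ≠ 0)
    (h : (q₁ = R₁ ∧ q₀ = R₀) ∨ g' = g) :
    g'⁻¹ * (g * (R₁ - q₁)) - (1 - g')⁻¹ * ((1 - g) * (R₀ - q₀)) + (q₁ - q₀) = R₁ - R₀ := by
  rcases h with ⟨rfl, rfl⟩ | rfl
  · ring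
  · field_simp
    ring

theorem stmt3_general
    {Ω : Type*} [MeasurableSpace Ω]
    (μ : Measure Ω) [IsProbabilityMeasure μ]
    (Y T Z : Ω → ℝ)
    (hT : Measurable T) (hZ : Measurable Z)
    (hTbin : ∀ ω, T ω = 0 ∨ T ω = 1)
    (ε : ℝ) (hε : 0 < ε)
    -- true propensity score, bounded away from 0 and 1
    (g : ℝ → ℝ)
    (hgdef : (fun ω => g (Z ω)) =ᵐ[μ] μ[T | MeasurableSpace.comap Z inferInstance])
    -- true conditional expected outcomes: E[Y 1{T=t} | Z] = Q t (Z) ⬝ P(T=t | Z)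
    (Q : ℝ → ℝ → ℝ)
    (hQ1 : μ[fun ω => (if T ω = 1 then (1:ℝ) else 0) * Y ω |
        MeasurableSpace.comap Z inferInstance] =ᵐ[μ] fun ω => Q 1 (Z ω) * g (Z ω))
    (hQ0 : μ[fun ω => (if T ω = 0 then (1:ℝ) else 0) * Y ω |
        MeasurableSpace.comap Z inferInstance] =ᵐ[μ] fun ω => Q 0 (Z ω) * (1 - g (Z ω)))
    -- candidate (possibly misspecified) nuisance functions
    (Q' : ℝ → ℝ → ℝ) (hQ'meas : ∀ t, Measurable (Q' t))
    (g' : ℝ → ℝ) (hg' : Measurable g')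
    (hpos' : ∀ᵐ ω ∂μ, ε ≤ g' (Z ω) ∧ g' (Z ω) ≤ 1 - ε)
    -- square integrability
    (hY2 : MemLp Y 2 μ)
    (hQ'2 : ∀ t, t = 0 ∨ t = 1 → MemLp (fun ω => Q' t (Z ω)) 2 μ)
    -- double robustness hypothesis: one of the nuisances is correctly specified
    (hdr : (∀ t z, Q' t z = Q t z) ∨ (∀ z, g' z = g z)) :
    ∫ ω, (T ω / g' (Z ω) * (Y ω - Q' 1 (Z ω))
        - (1 - T ω) / (1 - g' (Z ω)) * (Y ω - Q' 0 (Z ω))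
        + (Q' 1 (Z ω) - Q' 0 (Z ω))) ∂μ
      = ∫ ω, (Q 1 (Z ω) - Q 0 (Z ω)) ∂μ := by
  have hm : MeasurableSpace.comap Z inferInstance ≤ _ := hZ.comap_le
  have hZm {f : ℝ → ℝ} (hf : Measurable f) :
      StronglyMeasurable[MeasurableSpace.comap Z inferInstance] (fun ω => f (Z ω)) :=
    (hf.comp (comap_measurable Z)).stronglyMeasurable
  have hT₁ : (fun ω => (if T ω = 1 then (1:ℝ) else 0) * Y ω) = T * Y := by
    funext ω; rcases hTbin ω with h | h <;> simp [h]
  have hT₀ : (fun ω => (if T ω = 0 then (1:ℝ) else 0) * Y ω) = (1 - T) * Y := by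
    funext ω; rcases hTbin ω with h | h <;> simp [h]
  have hscore := condExp_aipw_score hm hε hT.aestronglyMeasurable
    (.of_forall fun ω => by rcases hTbin ω with h | h <;> simp [h])
    (hY2.integrable one_le_two) (hZm hg') hpos'
    (hZm (hQ'meas 1)) ((hQ'2 1 (.inr rfl)).integrable one_le_two)
    (hZm (hQ'meas 0)) ((hQ'2 0 (.inl rfl)).integrable one_le_two)
    hgdef.symm (hT₁ ▸ hQ1) (hT₀ ▸ hQ0)
  rw [← integral_condExp hm]
  refine integral_congr_ae (hscore.trans ?_)
  filter_upwards [hpos'] with ω hω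
  refine aipw_eq_of_double_robust (by linarith [hω.1]) (by linarith [hω.2]) ?_
  exact hdr.imp (fun h => ⟨h 1 _, h 0 _⟩) (fun h => h _)

/-- Double robustness of the A-IPTW score: if either the candidate outcome model
`Q̃` equals the true `Q` or the candidate propensity `g̃` equals the true `g`, then the expected
(un-centered) A-IPTW score equals the ATE `E[Q(1,Z) - Q(0,Z)]`, provided `ε ≤ g̃(Z) ≤ 1-ε` a.s. -/
theorem stmt3
    {Ω : Type*} [MeasurableSpace Ω]
    (μ : Measure Ω) [IsProbabilityMeasure μ]
    (Y T Z : Ω → ℝ)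
    (hY : Measurable Y) (hT : Measurable T) (hZ : Measurable Z)
    (hTbin : ∀ ω, T ω = 0 ∨ T ω = 1)
    (ε : ℝ) (hε : 0 < ε)
    -- true propensity score, bounded away from 0 and 1
    (g : ℝ → ℝ) (hg : Measurable g)
    (hgdef : (fun ω => g (Z ω)) =ᵐ[μ] μ[T | MeasurableSpace.comap Z inferInstance])
    (hpos : ∀ᵐ ω ∂μ, ε ≤ g (Z ω) ∧ g (Z ω) ≤ 1 - ε)
    -- true conditional expected outcomes: E[Y 1{T=t} | Z] = Q t (Z) ⬝ P(T=t | Z)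
    (Q : ℝ → ℝ → ℝ) (hQmeas : ∀ t, Measurable (Q t))
    (hQ1 : μ[fun ω => (if T ω = 1 then (1:ℝ) else 0) * Y ω |
        MeasurableSpace.comap Z inferInstance] =ᵐ[μ] fun ω => Q 1 (Z ω) * g (Z ω))
    (hQ0 : μ[fun ω => (if T ω = 0 then (1:ℝ) else 0) * Y ω |
        MeasurableSpace.comap Z inferInstance] =ᵐ[μ] fun ω => Q 0 (Z ω) * (1 - g (Z ω)))
    -- candidate (possibly misspecified) nuisance functions
    (Q' : ℝ → ℝ → ℝ) (hQ'meas : ∀ t, Measurable (Q' t))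
    (g' : ℝ → ℝ) (hg' : Measurable g')
    (hpos' : ∀ᵐ ω ∂μ, ε ≤ g' (Z ω) ∧ g' (Z ω) ≤ 1 - ε)
    -- square integrability
    (hY2 : MemLp Y 2 μ)
    (hQ2 : ∀ t, t = 0 ∨ t = 1 → MemLp (fun ω => Q t (Z ω)) 2 μ)
    (hQ'2 : ∀ t, t = 0 ∨ t = 1 → MemLp (fun ω => Q' t (Z ω)) 2 μ)
    -- double robustness hypothesis: one of the nuisances is correctly specified
    (hdr : (∀ t z, Q' t z = Q t z) ∨ (∀ z, g' z = g z)) :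
    ∫ ω, (T ω / g' (Z ω) * (Y ω - Q' 1 (Z ω))
        - (1 - T ω) / (1 - g' (Z ω)) * (Y ω - Q' 0 (Z ω))
        + (Q' 1 (Z ω) - Q' 0 (Z ω))) ∂μ
      = ∫ ω, (Q 1 (Z ω) - Q 0 (Z ω)) ∂μ :=
  stmt3_general μ Y T Z hT hZ hTbin ε hε g hgdef Q hQ1 hQ0 Q' hQ'meas g' hg' hpos' hY2 hQ'2 hdr
end

section
/- The bias of the A-IPTW functional at misspecified nuisance parameters factors as a product of errors: E[φ(Y,T,Z;ψ₀,Q̃,g̃)] = E[((g̃(Z)−g(Z))/g̃(Z))·(Q̃(1,Z)−Q(1,Z)) + ((g̃(Z)−g(Z))/(1−g̃(Z)))·(Q̃(0,Z)−Q(0,Z))]. -/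
open MeasureTheory ProbabilityTheory

section Helpers

variable {Ω : Type*} [MeasurableSpace Ω] {μ : Measure Ω}

lemma bdd_mul_int {b f : Ω → ℝ} {c : ℝ}
    (hb : AEStronglyMeasurable b μ) (hbc : ∀ᵐ ω ∂μ, |b ω| ≤ c)
    (hf : Integrable f μ) : Integrable (fun ω => b ω * f ω) μ :=
  hf.bdd_mul hb (by simpa [Real.norm_eq_abs] using hbc)

lemma int_mul_bdd {b f : Ω → ℝ} {c : ℝ}
    (hb : AEStronglyMeasurable b μ) (hbc : ∀ᵐ ω ∂μ, |b ω| ≤ c)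
    (hf : Integrable f μ) : Integrable (fun ω => f ω * b ω) μ :=
  (bdd_mul_int hb hbc hf).congr (Filter.Eventually.of_forall fun ω => mul_comm _ _)

lemma key_tower (μ : Measure Ω) [IsProbabilityMeasure μ]
    {Z : Ω → ℝ} (hZ : Measurable Z) {h : ℝ → ℝ} (hh : Measurable h)
    {X : Ω → ℝ} (hX : Integrable X μ)
    (hhX : Integrable (fun ω => h (Z ω) * X ω) μ)
    {k : ℝ → ℝ}
    (hXk : μ[X | MeasurableSpace.comap Z inferInstance] =ᵐ[μ] fun ω => k (Z ω)) :
    ∫ ω, h (Z ω) * X ω ∂μ = ∫ ω, h (Z ω) * k (Z ω) ∂μ := by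
  have hm : MeasurableSpace.comap Z inferInstance ≤ ‹MeasurableSpace Ω› := hZ.comap_le
  have hsm : StronglyMeasurable[MeasurableSpace.comap Z inferInstance] (fun ω => h (Z ω)) :=
    (hh.comp (Measurable.of_comap_le le_rfl)).stronglyMeasurable
  have h1 : μ[(fun ω => h (Z ω)) * X | MeasurableSpace.comap Z inferInstance]
      =ᵐ[μ] (fun ω => h (Z ω)) * μ[X | MeasurableSpace.comap Z inferInstance] :=
    condExp_mul_of_stronglyMeasurable_left hsm hhX hX
  have h2 : (fun ω => h (Z ω)) * μ[X | MeasurableSpace.comap Z inferInstance]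
      =ᵐ[μ] fun ω => h (Z ω) * k (Z ω) := by
    filter_upwards [hXk] with ω hω
    simp only [Pi.mul_apply, hω]
  calc ∫ ω, h (Z ω) * X ω ∂μ
      = ∫ ω, (μ[(fun ω => h (Z ω)) * X | MeasurableSpace.comap Z inferInstance]) ω ∂μ :=
        (integral_condExp hm).symm
    _ = ∫ ω, h (Z ω) * k (Z ω) ∂μ := integral_congr_ae (h1.trans h2)

end Helpers

/-- Bias factorization of the A-IPTW functional at misspecified nuisance
parameters: the expectation of the efficient score at `(ψ₀, Q', g')` equals the expectation of
the product-of-errors term. -/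
theorem stmt4
    {Ω : Type*} [MeasurableSpace Ω]
    (μ : Measure Ω) [IsProbabilityMeasure μ]
    (Y T Z : Ω → ℝ)
    (hY : Measurable Y) (hT : Measurable T) (hZ : Measurable Z)
    (hTbin : ∀ ω, T ω = 0 ∨ T ω = 1)
    (ε : ℝ) (hε : 0 < ε)
    -- true propensity score, bounded away from 0 and 1
    (g : ℝ → ℝ) (hg : Measurable g)
    (hgdef : (fun ω => g (Z ω)) =ᵐ[μ] μ[T | MeasurableSpace.comap Z inferInstance])
    (hpos : ∀ᵐ ω ∂μ, ε ≤ g (Z ω) ∧ g (Z ω) ≤ 1 - ε)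
    -- true conditional expected outcomes: E[Y 1{T=t} | Z] = Q t (Z) ⬝ P(T=t | Z)
    (Q : ℝ → ℝ → ℝ) (hQmeas : ∀ t, Measurable (Q t))
    (hQ1 : μ[fun ω => (if T ω = 1 then (1:ℝ) else 0) * Y ω |
        MeasurableSpace.comap Z inferInstance] =ᵐ[μ] fun ω => Q 1 (Z ω) * g (Z ω))
    (hQ0 : μ[fun ω => (if T ω = 0 then (1:ℝ) else 0) * Y ω |
        MeasurableSpace.comap Z inferInstance] =ᵐ[μ] fun ω => Q 0 (Z ω) * (1 - g (Z ω)))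
    -- candidate (possibly misspecified) nuisance functions
    (Q' : ℝ → ℝ → ℝ) (hQ'meas : ∀ t, Measurable (Q' t))
    (g' : ℝ → ℝ) (hg' : Measurable g')
    (hpos' : ∀ᵐ ω ∂μ, ε ≤ g' (Z ω) ∧ g' (Z ω) ≤ 1 - ε)
    -- square integrability
    (hY2 : MemLp Y 2 μ)
    (hQ2 : ∀ t, t = 0 ∨ t = 1 → MemLp (fun ω => Q t (Z ω)) 2 μ)
    (hQ'2 : ∀ t, t = 0 ∨ t = 1 → MemLp (fun ω => Q' t (Z ω)) 2 μ)
    -- the true ATE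
    (ψ₀ : ℝ) (hψ₀ : ψ₀ = ∫ ω, (Q 1 (Z ω) - Q 0 (Z ω)) ∂μ) :
    ∫ ω, (T ω / g' (Z ω) * (Y ω - Q' 1 (Z ω))
        - (1 - T ω) / (1 - g' (Z ω)) * (Y ω - Q' 0 (Z ω))
        + (Q' 1 (Z ω) - Q' 0 (Z ω)) - ψ₀) ∂μ
      = ∫ ω, ((g' (Z ω) - g (Z ω)) / g' (Z ω) * (Q' 1 (Z ω) - Q 1 (Z ω))
          + (g' (Z ω) - g (Z ω)) / (1 - g' (Z ω)) * (Q' 0 (Z ω) - Q 0 (Z ω))) ∂μ := by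
  classical
  have hm : MeasurableSpace.comap Z inferInstance ≤ ‹MeasurableSpace Ω› := hZ.comap_le
  -- a.e. bounds
  have hb1 : ∀ᵐ ω ∂μ, |1 / g' (Z ω)| ≤ 1 / ε := by
    filter_upwards [hpos'] with ω hω
    have h0 : 0 < g' (Z ω) := lt_of_lt_of_le hε hω.1
    rw [abs_of_pos (one_div_pos.mpr h0)]
    exact one_div_le_one_div_of_le hε hω.1
  have hb3 : ∀ᵐ ω ∂μ, |1 / (1 - g' (Z ω))| ≤ 1 / ε := by
    filter_upwards [hpos'] with ω hω
    have h0 : ε ≤ 1 - g' (Z ω) := by linarith [hω.2]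
    have h0' : 0 < 1 - g' (Z ω) := lt_of_lt_of_le hε h0
    rw [abs_of_pos (one_div_pos.mpr h0')]
    exact one_div_le_one_div_of_le hε h0
  have hbg : ∀ᵐ ω ∂μ, |g (Z ω)| ≤ 1 := by
    filter_upwards [hpos] with ω hω
    rw [abs_le]; constructor <;> [linarith [hω.1]; linarith [hω.2]]
  have hbg1 : ∀ᵐ ω ∂μ, |1 - g (Z ω)| ≤ 1 := by
    filter_upwards [hpos] with ω hω
    rw [abs_le]; constructor <;> [linarith [hω.2]; linarith [hω.1]]
  have hbT : ∀ᵐ ω ∂μ, |T ω| ≤ 1 := by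
    refine Filter.Eventually.of_forall fun ω => ?_
    rcases hTbin ω with h | h <;> simp [h]
  have hb1T : ∀ᵐ ω ∂μ, |1 - T ω| ≤ 1 := by
    refine Filter.Eventually.of_forall fun ω => ?_
    rcases hTbin ω with h | h <;> simp [h]
  have hbInd1 : ∀ᵐ ω ∂μ, |(if T ω = 1 then (1:ℝ) else 0)| ≤ 1 := by
    refine Filter.Eventually.of_forall fun ω => ?_
    split <;> simp
  have hbInd0 : ∀ᵐ ω ∂μ, |(if T ω = 0 then (1:ℝ) else 0)| ≤ 1 := by
    refine Filter.Eventually.of_forall fun ω => ?_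
    split <;> simp
  -- basic integrability
  have iY : Integrable Y μ := hY2.integrable one_le_two
  have iQ1 : Integrable (fun ω => Q 1 (Z ω)) μ := (hQ2 1 (Or.inr rfl)).integrable one_le_two
  have iQ0 : Integrable (fun ω => Q 0 (Z ω)) μ := (hQ2 0 (Or.inl rfl)).integrable one_le_two
  have iQ'1 : Integrable (fun ω => Q' 1 (Z ω)) μ := (hQ'2 1 (Or.inr rfl)).integrable one_le_two
  have iQ'0 : Integrable (fun ω => Q' 0 (Z ω)) μ := (hQ'2 0 (Or.inl rfl)).integrable one_le_two
  have iT : Integrable T μ := by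
    refine Integrable.mono' (integrable_const 1) hT.aestronglyMeasurable ?_
    refine Filter.Eventually.of_forall fun ω => ?_
    rcases hTbin ω with h | h <;> simp [h]
  have i1T : Integrable (fun ω => 1 - T ω) μ := (integrable_const 1).sub iT
  -- measurability
  have mg : Measurable fun ω => g (Z ω) := hg.comp hZ
  have m1g : Measurable fun ω => 1 - g (Z ω) := measurable_const.sub mg
  have mh1 : Measurable fun z => 1 / g' z := measurable_const.div hg'
  have mh3 : Measurable fun z => 1 / (1 - g' z) := measurable_const.div (measurable_const.sub hg')
  have mh2 : Measurable fun z => Q' 1 z / g' z := (hQ'meas 1).div hg'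
  have mh4 : Measurable fun z => Q' 0 z / (1 - g' z) :=
    (hQ'meas 0).div (measurable_const.sub hg')
  have mInd1 : Measurable fun ω => (if T ω = 1 then (1:ℝ) else 0) :=
    Measurable.ite (hT (measurableSet_singleton 1)) measurable_const measurable_const
  have mInd0 : Measurable fun ω => (if T ω = 0 then (1:ℝ) else 0) :=
    Measurable.ite (hT (measurableSet_singleton 0)) measurable_const measurable_const
  -- integrability of pieces
  have iIndY1 : Integrable (fun ω => (if T ω = 1 then (1:ℝ) else 0) * Y ω) μ :=
    bdd_mul_int mInd1.aestronglyMeasurable hbInd1 iY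
  have iIndY0 : Integrable (fun ω => (if T ω = 0 then (1:ℝ) else 0) * Y ω) μ :=
    bdd_mul_int mInd0.aestronglyMeasurable hbInd0 iY
  have if1 : Integrable (fun ω => 1 / g' (Z ω) * ((if T ω = 1 then (1:ℝ) else 0) * Y ω)) μ :=
    bdd_mul_int (mh1.comp hZ).aestronglyMeasurable hb1 iIndY1
  have if3 : Integrable (fun ω => 1 / (1 - g' (Z ω)) * ((if T ω = 0 then (1:ℝ) else 0) * Y ω)) μ :=
    bdd_mul_int (mh3.comp hZ).aestronglyMeasurable hb3 iIndY0
  have ih2 : Integrable (fun ω => Q' 1 (Z ω) / g' (Z ω)) μ := by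
    have := int_mul_bdd (mh1.comp hZ).aestronglyMeasurable hb1 iQ'1
    exact this.congr (Filter.Eventually.of_forall fun ω => by simp [Function.comp, div_eq_mul_inv])
  have ih4 : Integrable (fun ω => Q' 0 (Z ω) / (1 - g' (Z ω))) μ := by
    have := int_mul_bdd (mh3.comp hZ).aestronglyMeasurable hb3 iQ'0
    exact this.congr (Filter.Eventually.of_forall fun ω => by simp [Function.comp, div_eq_mul_inv])
  have if2 : Integrable (fun ω => Q' 1 (Z ω) / g' (Z ω) * T ω) μ :=
    int_mul_bdd hT.aestronglyMeasurable hbT ih2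
  have if4 : Integrable (fun ω => Q' 0 (Z ω) / (1 - g' (Z ω)) * (1 - T ω)) μ :=
    int_mul_bdd (measurable_const.sub hT).aestronglyMeasurable hb1T ih4
  have if5 : Integrable (fun ω => Q' 1 (Z ω) - Q' 0 (Z ω) - ψ₀) μ :=
    (iQ'1.sub iQ'0).sub (integrable_const ψ₀)
  -- integrability of the Z-side pieces
  have iG1 : Integrable (fun ω => 1 / g' (Z ω) * (Q 1 (Z ω) * g (Z ω))) μ :=
    bdd_mul_int (mh1.comp hZ).aestronglyMeasurable hb1
      (int_mul_bdd mg.aestronglyMeasurable hbg iQ1)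
  have iG2 : Integrable (fun ω => Q' 1 (Z ω) / g' (Z ω) * g (Z ω)) μ :=
    int_mul_bdd mg.aestronglyMeasurable hbg ih2
  have iG3 : Integrable (fun ω => 1 / (1 - g' (Z ω)) * (Q 0 (Z ω) * (1 - g (Z ω)))) μ :=
    bdd_mul_int (mh3.comp hZ).aestronglyMeasurable hb3
      (int_mul_bdd m1g.aestronglyMeasurable hbg1 iQ0)
  have iG4 : Integrable (fun ω => Q' 0 (Z ω) / (1 - g' (Z ω)) * (1 - g (Z ω))) μ :=
    int_mul_bdd m1g.aestronglyMeasurable hbg1 ih4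
  -- conditional expectation of 1 - T
  have hC1T : μ[fun ω => 1 - T ω | MeasurableSpace.comap Z inferInstance]
      =ᵐ[μ] fun ω => 1 - g (Z ω) := by
    have hsub : μ[(fun _ => (1:ℝ)) - T | MeasurableSpace.comap Z inferInstance]
        =ᵐ[μ] μ[(fun _ => (1:ℝ)) | MeasurableSpace.comap Z inferInstance]
          - μ[T | MeasurableSpace.comap Z inferInstance] :=
      condExp_sub (integrable_const 1) iT _
    have heq : (fun ω => (1:ℝ) - T ω) = ((fun _ => (1:ℝ)) - T) := rfl
    rw [heq]
    refine hsub.trans ?_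
    have hc := condExp_const hm (1:ℝ) (μ := μ)
    filter_upwards [hgdef] with ω hω
    simp [hc, Pi.sub_apply, ← hω]
  -- the four tower-property identities
  have e1 : ∫ ω, 1 / g' (Z ω) * ((if T ω = 1 then (1:ℝ) else 0) * Y ω) ∂μ
      = ∫ ω, 1 / g' (Z ω) * (Q 1 (Z ω) * g (Z ω)) ∂μ :=
    key_tower μ hZ (k := fun z => Q 1 z * g z) mh1 iIndY1 if1 hQ1
  have e2 : ∫ ω, Q' 1 (Z ω) / g' (Z ω) * T ω ∂μ
      = ∫ ω, Q' 1 (Z ω) / g' (Z ω) * g (Z ω) ∂μ :=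
    key_tower μ hZ (k := g) mh2 iT if2 hgdef.symm
  have e3 : ∫ ω, 1 / (1 - g' (Z ω)) * ((if T ω = 0 then (1:ℝ) else 0) * Y ω) ∂μ
      = ∫ ω, 1 / (1 - g' (Z ω)) * (Q 0 (Z ω) * (1 - g (Z ω))) ∂μ :=
    key_tower μ hZ (k := fun z => Q 0 z * (1 - g z)) mh3 iIndY0 if3 hQ0
  have e4 : ∫ ω, Q' 0 (Z ω) / (1 - g' (Z ω)) * (1 - T ω) ∂μ
      = ∫ ω, Q' 0 (Z ω) / (1 - g' (Z ω)) * (1 - g (Z ω)) ∂μ :=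
    key_tower μ hZ (k := fun z => 1 - g z) mh4 i1T if4 hC1T
  -- pointwise decomposition of the LHS integrand
  have hind1 : ∀ ω, (if T ω = 1 then (1:ℝ) else 0) = T ω := fun ω => by
    rcases hTbin ω with h | h <;> simp [h]
  have hind0 : ∀ ω, (if T ω = 0 then (1:ℝ) else 0) = 1 - T ω := fun ω => by
    rcases hTbin ω with h | h <;> simp [h]
  have eLfun : (fun ω => T ω / g' (Z ω) * (Y ω - Q' 1 (Z ω))
        - (1 - T ω) / (1 - g' (Z ω)) * (Y ω - Q' 0 (Z ω))
        + (Q' 1 (Z ω) - Q' 0 (Z ω)) - ψ₀)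
      = fun ω => 1 / g' (Z ω) * ((if T ω = 1 then (1:ℝ) else 0) * Y ω)
        - Q' 1 (Z ω) / g' (Z ω) * T ω
        - 1 / (1 - g' (Z ω)) * ((if T ω = 0 then (1:ℝ) else 0) * Y ω)
        + Q' 0 (Z ω) / (1 - g' (Z ω)) * (1 - T ω)
        + (Q' 1 (Z ω) - Q' 0 (Z ω) - ψ₀) := by
    funext ω
    rw [hind1 ω, hind0 ω]
    ring
  have eL : ∫ ω, (T ω / g' (Z ω) * (Y ω - Q' 1 (Z ω))
        - (1 - T ω) / (1 - g' (Z ω)) * (Y ω - Q' 0 (Z ω))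
        + (Q' 1 (Z ω) - Q' 0 (Z ω)) - ψ₀) ∂μ
      = (∫ ω, 1 / g' (Z ω) * ((if T ω = 1 then (1:ℝ) else 0) * Y ω) ∂μ)
        - (∫ ω, Q' 1 (Z ω) / g' (Z ω) * T ω ∂μ)
        - (∫ ω, 1 / (1 - g' (Z ω)) * ((if T ω = 0 then (1:ℝ) else 0) * Y ω) ∂μ)
        + (∫ ω, Q' 0 (Z ω) / (1 - g' (Z ω)) * (1 - T ω) ∂μ)
        + ∫ ω, (Q' 1 (Z ω) - Q' 0 (Z ω) - ψ₀) ∂μ := by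
    have i12 : Integrable (fun ω => 1 / g' (Z ω) * ((if T ω = 1 then (1:ℝ) else 0) * Y ω)
        - Q' 1 (Z ω) / g' (Z ω) * T ω) μ := if1.sub if2
    have i123 : Integrable (fun ω => 1 / g' (Z ω) * ((if T ω = 1 then (1:ℝ) else 0) * Y ω)
        - Q' 1 (Z ω) / g' (Z ω) * T ω
        - 1 / (1 - g' (Z ω)) * ((if T ω = 0 then (1:ℝ) else 0) * Y ω)) μ := i12.sub if3
    have i1234 : Integrable (fun ω => 1 / g' (Z ω) * ((if T ω = 1 then (1:ℝ) else 0) * Y ω)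
        - Q' 1 (Z ω) / g' (Z ω) * T ω
        - 1 / (1 - g' (Z ω)) * ((if T ω = 0 then (1:ℝ) else 0) * Y ω)
        + Q' 0 (Z ω) / (1 - g' (Z ω)) * (1 - T ω)) μ := i123.add if4
    rw [eLfun, integral_add i1234 if5, integral_add i123 if4, integral_sub i12 if3,
      integral_sub if1 if2]
  -- pointwise decomposition of the RHS integrand
  have eRfun : (fun ω => (g' (Z ω) - g (Z ω)) / g' (Z ω) * (Q' 1 (Z ω) - Q 1 (Z ω))
        + (g' (Z ω) - g (Z ω)) / (1 - g' (Z ω)) * (Q' 0 (Z ω) - Q 0 (Z ω)))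
      =ᵐ[μ] fun ω => 1 / g' (Z ω) * (Q 1 (Z ω) * g (Z ω))
        - Q' 1 (Z ω) / g' (Z ω) * g (Z ω)
        - 1 / (1 - g' (Z ω)) * (Q 0 (Z ω) * (1 - g (Z ω)))
        + Q' 0 (Z ω) / (1 - g' (Z ω)) * (1 - g (Z ω))
        + (Q' 1 (Z ω) - Q' 0 (Z ω))
        - (Q 1 (Z ω) - Q 0 (Z ω)) := by
    filter_upwards [hpos'] with ω hω
    have h0 : g' (Z ω) ≠ 0 := ne_of_gt (lt_of_lt_of_le hε hω.1)
    have h1 : 1 - g' (Z ω) ≠ 0 := ne_of_gt (by linarith [hω.2])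
    field_simp
    ring
  have eR : ∫ ω, ((g' (Z ω) - g (Z ω)) / g' (Z ω) * (Q' 1 (Z ω) - Q 1 (Z ω))
        + (g' (Z ω) - g (Z ω)) / (1 - g' (Z ω)) * (Q' 0 (Z ω) - Q 0 (Z ω))) ∂μ
      = (∫ ω, 1 / g' (Z ω) * (Q 1 (Z ω) * g (Z ω)) ∂μ)
        - (∫ ω, Q' 1 (Z ω) / g' (Z ω) * g (Z ω) ∂μ)
        - (∫ ω, 1 / (1 - g' (Z ω)) * (Q 0 (Z ω) * (1 - g (Z ω))) ∂μ)
        + (∫ ω, Q' 0 (Z ω) / (1 - g' (Z ω)) * (1 - g (Z ω)) ∂μ)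
        + (∫ ω, (Q' 1 (Z ω) - Q' 0 (Z ω)) ∂μ)
        - ∫ ω, (Q 1 (Z ω) - Q 0 (Z ω)) ∂μ := by
    have iQ'd : Integrable (fun ω => Q' 1 (Z ω) - Q' 0 (Z ω)) μ := iQ'1.sub iQ'0
    have iQd : Integrable (fun ω => Q 1 (Z ω) - Q 0 (Z ω)) μ := iQ1.sub iQ0
    have j12 : Integrable (fun ω => 1 / g' (Z ω) * (Q 1 (Z ω) * g (Z ω))
        - Q' 1 (Z ω) / g' (Z ω) * g (Z ω)) μ := iG1.sub iG2
    have j123 : Integrable (fun ω => 1 / g' (Z ω) * (Q 1 (Z ω) * g (Z ω))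
        - Q' 1 (Z ω) / g' (Z ω) * g (Z ω)
        - 1 / (1 - g' (Z ω)) * (Q 0 (Z ω) * (1 - g (Z ω)))) μ := j12.sub iG3
    have j1234 : Integrable (fun ω => 1 / g' (Z ω) * (Q 1 (Z ω) * g (Z ω))
        - Q' 1 (Z ω) / g' (Z ω) * g (Z ω)
        - 1 / (1 - g' (Z ω)) * (Q 0 (Z ω) * (1 - g (Z ω)))
        + Q' 0 (Z ω) / (1 - g' (Z ω)) * (1 - g (Z ω))) μ := j123.add iG4
    have j12345 : Integrable (fun ω => 1 / g' (Z ω) * (Q 1 (Z ω) * g (Z ω))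
        - Q' 1 (Z ω) / g' (Z ω) * g (Z ω)
        - 1 / (1 - g' (Z ω)) * (Q 0 (Z ω) * (1 - g (Z ω)))
        + Q' 0 (Z ω) / (1 - g' (Z ω)) * (1 - g (Z ω))
        + (Q' 1 (Z ω) - Q' 0 (Z ω))) μ := j1234.add iQ'd
    rw [integral_congr_ae eRfun, integral_sub j12345 iQd, integral_add j1234 iQ'd,
      integral_add j123 iG4, integral_sub j12 iG3, integral_sub iG1 iG2]
  have ef5 : ∫ ω, (Q' 1 (Z ω) - Q' 0 (Z ω) - ψ₀) ∂μ
      = (∫ ω, (Q' 1 (Z ω) - Q' 0 (Z ω)) ∂μ) - ψ₀ := by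
    have iQ'd : Integrable (fun ω => Q' 1 (Z ω) - Q' 0 (Z ω)) μ := iQ'1.sub iQ'0
    rw [integral_sub iQ'd (integrable_const ψ₀), integral_const]
    simp
  rw [eL, eR, e1, e2, e3, e4, ef5, hψ₀]
  ring
end

section
/- Under the conditions ε ≤ g̃(Z) ≤ 1−ε a.s. and the product-rate condition ‖Q̃(d,·)−Q(d,·)‖_{P,2}·‖g̃−g‖_{P,2} ≤ δ·n^{−1/2} for d ∈ {0,1}, the absolute bias satisfies |E[φ(Y,T,Z;ψ₀,Q̃,g̃)]| ≤ (2/ε)·δ·n^{−1/2}. -/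
/-!
Conditioning on `Z`, an inverse-probability-weighted arm `A / e' · (Y - q') + (q' - q)` has mean
`E[(q' - q)(e' - e) / e']`, because `E[A | Z] = e` and `E[A Y | Z] = q e`. The treated arm
(`A = T`) and the control arm (`A = 1 - T`, with `1 - e, 1 - e'` in place of `e, e'`) make the
bias a sum of two such products sharing the factor `e' - e`, and Cauchy–Schwarz with
`|e'|, |1 - e'| ≥ ε` bounds each by `ε⁻¹ ‖q' - q‖₂ ‖e' - e‖₂`.
-/

open MeasureTheory Filter

section

variable {Ω : Type*} {m m₀ : MeasurableSpace Ω} {μ : Measure Ω}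

theorem integral_abs_mul_abs_le_sqrt_mul_sqrt {u v : Ω → ℝ} (hu : MemLp u 2 μ)
    (hv : MemLp v 2 μ) :
    ∫ ω, |u ω| * |v ω| ∂μ ≤ √(∫ ω, u ω ^ 2 ∂μ) * √(∫ ω, v ω ^ 2 ∂μ) := by
  have h2 : ENNReal.ofReal 2 = 2 := by norm_num
  have := integral_mul_norm_le_Lp_mul_Lq Real.HolderConjugate.two_two (h2 ▸ hu) (h2 ▸ hv)
  simpa only [Real.norm_eq_abs, Real.rpow_two, sq_abs, Real.sqrt_eq_rpow] using this

theorem abs_integral_mul_div_le {u v w : Ω → ℝ} {ε : ℝ} (hε : 0 < ε) (hu : MemLp u 2 μ)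
    (hv : MemLp v 2 μ) (hwε : ∀ᵐ ω ∂μ, ε ≤ |w ω|) :
    |∫ ω, u ω * v ω / w ω ∂μ| ≤ ε⁻¹ * (√(∫ ω, u ω ^ 2 ∂μ) * √(∫ ω, v ω ^ 2 ∂μ)) := by
  have huv : Integrable (fun ω => |u ω| * |v ω|) μ := hu.abs.integrable_mul hv.abs
  have hpointwise : ∀ᵐ ω ∂μ, |u ω * v ω / w ω| ≤ ε⁻¹ * (|u ω| * |v ω|) := by
    filter_upwards [hwε] with ω hω
    rw [abs_div, abs_mul, div_eq_inv_mul]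
    gcongr
  calc |∫ ω, u ω * v ω / w ω ∂μ| ≤ ∫ ω, |u ω * v ω / w ω| ∂μ := abs_integral_le_integral_abs
    _ ≤ ∫ ω, ε⁻¹ * (|u ω| * |v ω|) ∂μ :=
      integral_mono_of_nonneg (.of_forall fun ω => abs_nonneg _) (huv.const_mul _) hpointwise
    _ = ε⁻¹ * ∫ ω, |u ω| * |v ω| ∂μ := integral_const_mul _ _
    _ ≤ _ := by gcongr; exact integral_abs_mul_abs_le_sqrt_mul_sqrt hu hv

theorem MeasureTheory.Integrable.div_mul_of_abs_le_one {A w f : Ω → ℝ} {ε : ℝ}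
    (hf : Integrable f μ) (hε : 0 < ε) (hA : AEStronglyMeasurable A μ) (hA1 : ∀ᵐ ω ∂μ, |A ω| ≤ 1)
    (hw : AEStronglyMeasurable w μ) (hwε : ∀ᵐ ω ∂μ, ε ≤ |w ω|) :
    Integrable (fun ω => A ω / w ω * f ω) μ := by
  refine hf.bdd_mul (hA.aemeasurable.div hw.aemeasurable).aestronglyMeasurable (c := ε⁻¹) ?_
  filter_upwards [hA1, hwε] with ω hA1 hwε
  rw [Real.norm_eq_abs, abs_div, div_eq_mul_inv]
  calc |A ω| * |w ω|⁻¹ ≤ 1 * ε⁻¹ := by gcongr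
    _ = ε⁻¹ := one_mul _

theorem integrable_ipw_add_sub {A w Y q q' : Ω → ℝ} {ε : ℝ} (hε : 0 < ε)
    (hA : AEStronglyMeasurable A μ) (hA1 : ∀ᵐ ω ∂μ, |A ω| ≤ 1) (hw : AEStronglyMeasurable w μ)
    (hwε : ∀ᵐ ω ∂μ, ε ≤ |w ω|) (hY : Integrable Y μ) (hq' : Integrable q' μ)
    (hq : Integrable q μ) :
    Integrable (fun ω => A ω / w ω * (Y ω - q' ω) + (q' ω - q ω)) μ :=
  ((hY.sub hq').div_mul_of_abs_le_one hε hA hA1 hw hwε).add (hq'.sub hq)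

theorem integrable_mul_condExp {h f : Ω → ℝ} (hh : StronglyMeasurable[m] h)
    (hhf : Integrable (h * f) μ) (hf : Integrable f μ) : Integrable (h * μ[f|m]) μ :=
  integrable_condExp.congr (condExp_mul_of_stronglyMeasurable_left hh hhf hf)

theorem integral_mul_condExp (hm : m ≤ m₀) [SigmaFinite (μ.trim hm)] {h f : Ω → ℝ}
    (hh : StronglyMeasurable[m] h) (hhf : Integrable (h * f) μ) (hf : Integrable f μ) :
    ∫ ω, h ω * μ[f|m] ω ∂μ = ∫ ω, h ω * f ω ∂μ :=
  calc ∫ ω, h ω * μ[f|m] ω ∂μ = ∫ ω, μ[h * f|m] ω ∂μ :=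
        integral_congr_ae (condExp_mul_of_stronglyMeasurable_left hh hhf hf).symm
    _ = ∫ ω, h ω * f ω ∂μ := integral_condExp hm

theorem integral_ipw_add_sub_eq [IsFiniteMeasure μ] (hm : m ≤ m₀) {A Y e e' q q' : Ω → ℝ}
    {ε : ℝ} (hε : 0 < ε) (hA : AEStronglyMeasurable A μ) (hA1 : ∀ᵐ ω ∂μ, |A ω| ≤ 1)
    (hY : Integrable Y μ) (he' : StronglyMeasurable[m] e') (he'ε : ∀ᵐ ω ∂μ, ε ≤ |e' ω|)
    (hq' : StronglyMeasurable[m] q') (hq'int : Integrable q' μ) (hq : Integrable q μ)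
    (hAe : μ[A|m] =ᵐ[μ] e) (hAY : μ[A * Y|m] =ᵐ[μ] q * e) :
    ∫ ω, (A ω / e' ω * (Y ω - q' ω) + (q' ω - q ω)) ∂μ
      = ∫ ω, (q' ω - q ω) * (e' ω - e ω) / e' ω ∂μ := by
  have he'μ : AEStronglyMeasurable e' μ := (he'.mono hm).aestronglyMeasurable
  have hAint : Integrable A μ := .of_bound hA 1 (by simpa only [Real.norm_eq_abs] using hA1)
  have hAYint : Integrable (A * Y) μ :=
    hY.bdd_mul hA (c := 1) (by simpa only [Real.norm_eq_abs] using hA1)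
  have hinv : StronglyMeasurable[m] e'⁻¹ := he'.measurable.inv.stronglyMeasurable
  have ha : Integrable (e'⁻¹ * (A * Y)) μ :=
    (hY.div_mul_of_abs_le_one hε hA hA1 he'μ he'ε).congr
      (.of_forall fun ω => by simp only [Pi.mul_apply, Pi.inv_apply]; ring)
  have hb : Integrable (q' * e'⁻¹ * A) μ :=
    (hq'int.div_mul_of_abs_le_one hε hA hA1 he'μ he'ε).congr
      (.of_forall fun ω => by simp only [Pi.mul_apply, Pi.inv_apply]; ring)
  have hc : Integrable (q' - q) μ := hq'int.sub hq
  have ha' : Integrable (e'⁻¹ * (q * e)) μ :=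
    (integrable_mul_condExp hinv ha hAYint).congr (EventuallyEq.rfl.mul hAY)
  have hb' : Integrable (q' * e'⁻¹ * e) μ :=
    (integrable_mul_condExp (hq'.mul hinv) hb hAint).congr (EventuallyEq.rfl.mul hAe)
  have hcond_a : ∫ ω, (e'⁻¹ * (A * Y)) ω ∂μ = ∫ ω, (e'⁻¹ * (q * e)) ω ∂μ :=
    (integral_mul_condExp hm hinv ha hAYint).symm.trans
      (integral_congr_ae (EventuallyEq.rfl.mul hAY))
  have hcond_b : ∫ ω, (q' * e'⁻¹ * A) ω ∂μ = ∫ ω, (q' * e'⁻¹ * e) ω ∂μ :=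
    (integral_mul_condExp hm (hq'.mul hinv) hb hAint).symm.trans
      (integral_congr_ae (EventuallyEq.rfl.mul hAe))
  calc ∫ ω, (A ω / e' ω * (Y ω - q' ω) + (q' ω - q ω)) ∂μ
      = ∫ ω, (e'⁻¹ * (A * Y) - q' * e'⁻¹ * A + (q' - q)) ω ∂μ :=
        integral_congr_ae (.of_forall fun ω => by
          simp only [Pi.add_apply, Pi.sub_apply, Pi.mul_apply, Pi.inv_apply]; ring)
    _ = ∫ ω, (e'⁻¹ * (q * e) - q' * e'⁻¹ * e + (q' - q)) ω ∂μ := by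
        rw [integral_add' (ha.sub hb) hc, integral_sub' ha hb, hcond_a, hcond_b,
          integral_add' (ha'.sub hb') hc, integral_sub' ha' hb']
    _ = ∫ ω, (q' ω - q ω) * (e' ω - e ω) / e' ω ∂μ := by
        refine integral_congr_ae ?_
        filter_upwards [he'ε] with ω hω
        have : e' ω ≠ 0 := abs_pos.mp (hε.trans_le hω)
        simp only [Pi.add_apply, Pi.sub_apply, Pi.mul_apply, Pi.inv_apply]
        field_simp
        ring

theorem integral_aiptw_sub_eq [IsProbabilityMeasure μ] (hm : m ≤ m₀)
    {T Y e e' q₀ q₁ q₀' q₁' : Ω → ℝ} {ε : ℝ} (hε : 0 < ε) (hT : AEStronglyMeasurable T μ)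
    (hT01 : ∀ᵐ ω ∂μ, 0 ≤ T ω ∧ T ω ≤ 1) (hY : Integrable Y μ) (he' : StronglyMeasurable[m] e')
    (he'ε : ∀ᵐ ω ∂μ, ε ≤ e' ω ∧ e' ω ≤ 1 - ε)
    (hq₀' : StronglyMeasurable[m] q₀') (hq₁' : StronglyMeasurable[m] q₁')
    (hq₀'int : Integrable q₀' μ) (hq₁'int : Integrable q₁' μ)
    (hq₀ : Integrable q₀ μ) (hq₁ : Integrable q₁ μ) (hTe : μ[T|m] =ᵐ[μ] e)
    (hTY₁ : μ[T * Y|m] =ᵐ[μ] q₁ * e) (hTY₀ : μ[(1 - T) * Y|m] =ᵐ[μ] q₀ * (1 - e)) :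
    ∫ ω, (T ω / e' ω * (Y ω - q₁' ω) - (1 - T ω) / (1 - e' ω) * (Y ω - q₀' ω)
        + (q₁' ω - q₀' ω) - ∫ ω, (q₁ ω - q₀ ω) ∂μ) ∂μ
      = ∫ ω, (q₁' ω - q₁ ω) * (e' ω - e ω) / e' ω ∂μ
        + ∫ ω, (q₀' ω - q₀ ω) * (e' ω - e ω) / (1 - e' ω) ∂μ := by
  have hT1 : ∀ᵐ ω ∂μ, |T ω| ≤ 1 := hT01.mono fun ω h => abs_le.mpr ⟨by linarith, h.2⟩
  have hT0 : ∀ᵐ ω ∂μ, |1 - T ω| ≤ 1 :=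
    hT01.mono fun ω h => abs_le.mpr ⟨by linarith, by linarith⟩
  have he'1 : ∀ᵐ ω ∂μ, ε ≤ |e' ω| := he'ε.mono fun ω h => h.1.trans (le_abs_self _)
  have he'0 : ∀ᵐ ω ∂μ, ε ≤ |1 - e' ω| :=
    he'ε.mono fun ω h => (show ε ≤ 1 - e' ω by linarith [h.2]).trans (le_abs_self _)
  have hTint : Integrable T μ := .of_bound hT 1 (by simpa only [Real.norm_eq_abs] using hT1)
  have hcontrol_e : μ[fun ω => 1 - T ω|m] =ᵐ[μ] fun ω => 1 - e ω :=
    calc μ[fun ω => 1 - T ω|m] =ᵐ[μ] μ[fun _ => 1|m] - μ[T|m] :=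
          condExp_sub (integrable_const 1) hTint m
      _ = fun ω => 1 - μ[T|m] ω := by rw [condExp_const hm]; rfl
      _ =ᵐ[μ] fun ω => 1 - e ω := hTe.mono fun ω h => congrArg (1 - ·) h
  have he'μ : AEStronglyMeasurable e' μ := (he'.mono hm).aestronglyMeasurable
  have hTc : AEStronglyMeasurable (fun ω => 1 - T ω) μ := aestronglyMeasurable_const.sub hT
  have he'c : AEStronglyMeasurable (fun ω => 1 - e' ω) μ := aestronglyMeasurable_const.sub he'μ
  have iT := integrable_ipw_add_sub hε hT hT1 he'μ he'1 hY hq₁'int hq₁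
  have iC := integrable_ipw_add_sub hε hTc hT0 he'c he'0 hY hq₀'int hq₀
  have iQ := hq₁.sub' hq₀
  have htreated := integral_ipw_add_sub_eq hm hε hT hT1 hY he' he'1 hq₁' hq₁'int hq₁ hTe hTY₁
  have hcontrol := integral_ipw_add_sub_eq (A := fun ω => 1 - T ω) (e' := fun ω => 1 - e' ω) hm
    hε hTc hT0 hY (stronglyMeasurable_const.sub he') he'0 hq₀' hq₀'int hq₀ hcontrol_e hTY₀
  calc _ = ∫ ω, ((T ω / e' ω * (Y ω - q₁' ω) + (q₁' ω - q₁ ω))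
          - ((1 - T ω) / (1 - e' ω) * (Y ω - q₀' ω) + (q₀' ω - q₀ ω))
          + ((q₁ ω - q₀ ω) - ∫ ω, (q₁ ω - q₀ ω) ∂μ)) ∂μ :=
        integral_congr_ae (.of_forall fun ω => by ring)
    _ = ∫ ω, (q₁' ω - q₁ ω) * (e' ω - e ω) / e' ω ∂μ
        - ∫ ω, (q₀' ω - q₀ ω) * ((1 - e' ω) - (1 - e ω)) / (1 - e' ω) ∂μ := by
        rw [integral_add (iT.sub' iC) (iQ.sub' (integrable_const _)), integral_sub iT iC,
          integral_sub iQ (integrable_const _), integral_const, htreated, hcontrol]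
        simp
    _ = _ := by
        rw [sub_eq_add_neg, ← integral_neg]
        congr 1
        exact integral_congr_ae (.of_forall fun ω => by ring)

end

theorem stmt5_general
    {Ω : Type*} [MeasurableSpace Ω]
    (μ : Measure Ω) [IsProbabilityMeasure μ]
    (Y T Z : Ω → ℝ)
    (hT : Measurable T) (hZ : Measurable Z)
    (hTbin : ∀ ω, T ω = 0 ∨ T ω = 1)
    (ε : ℝ) (hε : 0 < ε)
    -- true propensity score, bounded away from 0 and 1
    (g : ℝ → ℝ) (hg : Measurable g)
    (hgdef : (fun ω => g (Z ω)) =ᵐ[μ] μ[T | MeasurableSpace.comap Z inferInstance])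
    (hpos : ∀ᵐ ω ∂μ, ε ≤ g (Z ω) ∧ g (Z ω) ≤ 1 - ε)
    -- true conditional expected outcomes: E[Y 1{T=t} | Z] = Q t (Z) ⬝ P(T=t | Z)
    (Q : ℝ → ℝ → ℝ)
    (hQ1 : μ[fun ω => (if T ω = 1 then (1:ℝ) else 0) * Y ω |
        MeasurableSpace.comap Z inferInstance] =ᵐ[μ] fun ω => Q 1 (Z ω) * g (Z ω))
    (hQ0 : μ[fun ω => (if T ω = 0 then (1:ℝ) else 0) * Y ω |
        MeasurableSpace.comap Z inferInstance] =ᵐ[μ] fun ω => Q 0 (Z ω) * (1 - g (Z ω)))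
    -- candidate (possibly misspecified) nuisance functions
    (Q' : ℝ → ℝ → ℝ) (hQ'meas : ∀ t, Measurable (Q' t))
    (g' : ℝ → ℝ) (hg' : Measurable g')
    (hpos' : ∀ᵐ ω ∂μ, ε ≤ g' (Z ω) ∧ g' (Z ω) ≤ 1 - ε)
    -- square integrability
    (hY2 : MemLp Y 2 μ)
    (hQ2 : ∀ t, t = 0 ∨ t = 1 → MemLp (fun ω => Q t (Z ω)) 2 μ)
    (hQ'2 : ∀ t, t = 0 ∨ t = 1 → MemLp (fun ω => Q' t (Z ω)) 2 μ)
    -- the true ATE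
    (ψ₀ : ℝ) (hψ₀ : ψ₀ = ∫ ω, (Q 1 (Z ω) - Q 0 (Z ω)) ∂μ)
    -- sample size and rate
    (n : ℕ) (δ : ℝ)
    -- the product-rate condition on L²(P) errors
    (hrate : ∀ d : ℝ, d = 0 ∨ d = 1 →
      Real.sqrt (∫ ω, (Q' d (Z ω) - Q d (Z ω)) ^ 2 ∂μ)
          * Real.sqrt (∫ ω, (g' (Z ω) - g (Z ω)) ^ 2 ∂μ)
        ≤ δ * (n : ℝ) ^ (-(1:ℝ)/2)) :
    |∫ ω, (T ω / g' (Z ω) * (Y ω - Q' 1 (Z ω))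
        - (1 - T ω) / (1 - g' (Z ω)) * (Y ω - Q' 0 (Z ω))
        + (Q' 1 (Z ω) - Q' 0 (Z ω)) - ψ₀) ∂μ|
      ≤ 2 / ε * δ * (n : ℝ) ^ (-(1:ℝ)/2) := by
  have hZm : Measurable[MeasurableSpace.comap Z inferInstance] Z := comap_measurable Z
  have hT01 : ∀ᵐ ω ∂μ, 0 ≤ T ω ∧ T ω ≤ 1 :=
    .of_forall fun ω => by rcases hTbin ω with h | h <;> simp [h]
  have hTY : (fun ω => (if T ω = 1 then (1:ℝ) else 0) * Y ω) = T * Y :=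
    funext fun ω => by rcases hTbin ω with h | h <;> simp [h]
  have hTY0 : (fun ω => (if T ω = 0 then (1:ℝ) else 0) * Y ω) = (1 - T) * Y :=
    funext fun ω => by rcases hTbin ω with h | h <;> simp [h]
  have hg_err : MemLp (fun ω => g' (Z ω) - g (Z ω)) 2 μ := by
    refine .of_bound ((hg'.comp hZ).sub (hg.comp hZ)).aestronglyMeasurable 1 ?_
    filter_upwards [hpos, hpos'] with ω h h'
    rw [Real.norm_eq_abs, abs_le]
    constructor <;> linarith
  have hbias (d : ℝ) (hd : d = 0 ∨ d = 1) {w : Ω → ℝ} (hw : ∀ᵐ ω ∂μ, ε ≤ |w ω|) :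
      |∫ ω, (Q' d (Z ω) - Q d (Z ω)) * (g' (Z ω) - g (Z ω)) / w ω ∂μ|
        ≤ ε⁻¹ * (δ * (n : ℝ) ^ (-(1:ℝ)/2)) :=
    (abs_integral_mul_div_le hε ((hQ'2 d hd).sub (hQ2 d hd)) hg_err hw).trans
      (mul_le_mul_of_nonneg_left (hrate d hd) (inv_nonneg.mpr hε.le))
  rw [hψ₀, integral_aiptw_sub_eq (e := fun ω => g (Z ω)) (e' := fun ω => g' (Z ω))
    (q₀' := fun ω => Q' 0 (Z ω)) (q₁' := fun ω => Q' 1 (Z ω)) hZ.comap_le hε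
    hT.aestronglyMeasurable hT01 (hY2.integrable one_le_two)
    (hg'.comp hZm).stronglyMeasurable hpos' ((hQ'meas 0).comp hZm).stronglyMeasurable
    ((hQ'meas 1).comp hZm).stronglyMeasurable ((hQ'2 0 (.inl rfl)).integrable one_le_two)
    ((hQ'2 1 (.inr rfl)).integrable one_le_two) ((hQ2 0 (.inl rfl)).integrable one_le_two)
    ((hQ2 1 (.inr rfl)).integrable one_le_two) hgdef.symm (hTY ▸ hQ1) (hTY0 ▸ hQ0)]
  calc _ ≤ _ := abs_add_le _ _
    _ ≤ ε⁻¹ * (δ * (n : ℝ) ^ (-(1:ℝ)/2)) + ε⁻¹ * (δ * (n : ℝ) ^ (-(1:ℝ)/2)) :=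
      add_le_add (hbias 1 (.inr rfl) (hpos'.mono fun ω h => h.1.trans (le_abs_self _)))
        (hbias 0 (.inl rfl) (hpos'.mono fun ω h =>
          (by linarith [h.2] : ε ≤ 1 - g' (Z ω)).trans (le_abs_self _)))
    _ = 2 / ε * δ * (n : ℝ) ^ (-(1:ℝ)/2) := by ring

/-- Under positivity `ε ≤ g'(Z) ≤ 1-ε` a.s. and the product-rate condition
`‖Q'(d,·) - Q(d,·)‖₂ · ‖g' - g‖₂ ≤ δ n^{-1/2}` for `d ∈ {0,1}`, the absolute bias of the
A-IPTW functional satisfies `|E[φ(ψ₀, Q', g')]| ≤ (2/ε) δ n^{-1/2}`. -/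
theorem stmt5
    {Ω : Type*} [MeasurableSpace Ω]
    (μ : Measure Ω) [IsProbabilityMeasure μ]
    (Y T Z : Ω → ℝ)
    (hY : Measurable Y) (hT : Measurable T) (hZ : Measurable Z)
    (hTbin : ∀ ω, T ω = 0 ∨ T ω = 1)
    (ε : ℝ) (hε : 0 < ε)
    -- true propensity score, bounded away from 0 and 1
    (g : ℝ → ℝ) (hg : Measurable g)
    (hgdef : (fun ω => g (Z ω)) =ᵐ[μ] μ[T | MeasurableSpace.comap Z inferInstance])
    (hpos : ∀ᵐ ω ∂μ, ε ≤ g (Z ω) ∧ g (Z ω) ≤ 1 - ε)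
    -- true conditional expected outcomes: E[Y 1{T=t} | Z] = Q t (Z) ⬝ P(T=t | Z)
    (Q : ℝ → ℝ → ℝ) (hQmeas : ∀ t, Measurable (Q t))
    (hQ1 : μ[fun ω => (if T ω = 1 then (1:ℝ) else 0) * Y ω |
        MeasurableSpace.comap Z inferInstance] =ᵐ[μ] fun ω => Q 1 (Z ω) * g (Z ω))
    (hQ0 : μ[fun ω => (if T ω = 0 then (1:ℝ) else 0) * Y ω |
        MeasurableSpace.comap Z inferInstance] =ᵐ[μ] fun ω => Q 0 (Z ω) * (1 - g (Z ω)))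
    -- candidate (possibly misspecified) nuisance functions
    (Q' : ℝ → ℝ → ℝ) (hQ'meas : ∀ t, Measurable (Q' t))
    (g' : ℝ → ℝ) (hg' : Measurable g')
    (hpos' : ∀ᵐ ω ∂μ, ε ≤ g' (Z ω) ∧ g' (Z ω) ≤ 1 - ε)
    -- square integrability
    (hY2 : MemLp Y 2 μ)
    (hQ2 : ∀ t, t = 0 ∨ t = 1 → MemLp (fun ω => Q t (Z ω)) 2 μ)
    (hQ'2 : ∀ t, t = 0 ∨ t = 1 → MemLp (fun ω => Q' t (Z ω)) 2 μ)
    -- the true ATE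
    (ψ₀ : ℝ) (hψ₀ : ψ₀ = ∫ ω, (Q 1 (Z ω) - Q 0 (Z ω)) ∂μ)
    -- sample size and rate
    (n : ℕ) (hn : 0 < n) (δ : ℝ) (hδ : 0 < δ)
    -- the product-rate condition on L²(P) errors
    (hrate : ∀ d : ℝ, d = 0 ∨ d = 1 →
      Real.sqrt (∫ ω, (Q' d (Z ω) - Q d (Z ω)) ^ 2 ∂μ)
          * Real.sqrt (∫ ω, (g' (Z ω) - g (Z ω)) ^ 2 ∂μ)
        ≤ δ * (n : ℝ) ^ (-(1:ℝ)/2)) :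
    |∫ ω, (T ω / g' (Z ω) * (Y ω - Q' 1 (Z ω))
        - (1 - T ω) / (1 - g' (Z ω)) * (Y ω - Q' 0 (Z ω))
        + (Q' 1 (Z ω) - Q' 0 (Z ω)) - ψ₀) ∂μ|
      ≤ 2 / ε * δ * (n : ℝ) ^ (-(1:ℝ)/2) :=
  stmt5_general μ Y T Z hT hZ hTbin ε hε g hg hgdef hpos Q hQ1 hQ0 Q' hQ'meas g' hg' hpos' hY2 hQ2
    hQ'2 ψ₀ hψ₀ n δ hrate
end

section
/- Let Q(t,Z) = E[Y|T=t,Z] with Y = Q(T,Z) + ζ, E[ζ|Z,T]=0, E[ζ²|Z] ≤ C a.s., P(g(Z) ≤ 1) = 1, and suppose ε ≤ g̃(Z) ≤ 1−ε a.s. Then ‖T(Y−Q̃(1,Z))/g̃(Z) − T(Y−Q(1,Z))/g(Z)‖_{P,2} ≤ ε^{−2}(‖Q̃(1,·)−Q(1,·)‖_{P,2} + √C·‖g̃−g‖_{P,2}). -/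
open MeasureTheory ProbabilityTheory

lemma sqrt_integral_sq_eq {Ω : Type*} [MeasurableSpace Ω] {μ : Measure Ω} {f : Ω → ℝ}
    (hf : MemLp f 2 μ) : Real.sqrt (∫ ω, f ω ^ 2 ∂μ) = ‖hf.toLp f‖ := by
  have h1 : (inner ℝ (hf.toLp f) (hf.toLp f) : ℝ) = ∫ ω, f ω ^ 2 ∂μ := by
    rw [L2.inner_def]
    refine integral_congr_ae ?_
    filter_upwards [hf.coeFn_toLp] with ω h
    simp [h, RCLike.inner_apply, sq]
  rw [real_inner_self_eq_norm_sq] at h1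
  rw [← h1, Real.sqrt_sq (norm_nonneg _)]

lemma sqrt_integral_add_sq_le {Ω : Type*} [MeasurableSpace Ω] {μ : Measure Ω} {f g : Ω → ℝ}
    (hf : MemLp f 2 μ) (hg : MemLp g 2 μ) :
    Real.sqrt (∫ ω, (f ω + g ω) ^ 2 ∂μ)
      ≤ Real.sqrt (∫ ω, f ω ^ 2 ∂μ) + Real.sqrt (∫ ω, g ω ^ 2 ∂μ) := by
  have h := sqrt_integral_sq_eq (hf.add hg)
  have e : (∫ ω, (f ω + g ω) ^ 2 ∂μ) = ∫ ω, (f + g) ω ^ 2 ∂μ := rfl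
  rw [e, h, sqrt_integral_sq_eq hf, sqrt_integral_sq_eq hg, MemLp.toLp_add]
  exact norm_add_le _ _

set_option maxHeartbeats 1000000 in
/-- With `Y = Q(T,Z) + ζ`, `E[ζ | Z,T] = 0`, `E[ζ² | Z] ≤ C` a.s., `g(Z) ≤ 1` a.s.,
`ε ≤ g(Z)` a.s. and `ε ≤ g̃(Z) ≤ 1-ε` a.s., we have
`‖T(Y - Q̃(1,Z))/g̃(Z) - T(Y - Q(1,Z))/g(Z)‖₂ ≤ ε⁻²(‖Q̃(1,·) - Q(1,·)‖₂ + √C ‖g̃ - g‖₂)`. -/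
theorem stmt6
    {Ω : Type*} [MeasurableSpace Ω]
    (μ : Measure Ω) [IsProbabilityMeasure μ]
    (Y T Z ζ : Ω → ℝ)
    (hY : Measurable Y) (hT : Measurable T) (hZ : Measurable Z) (hζ : Measurable ζ)
    (hTbin : ∀ ω, T ω = 0 ∨ T ω = 1)
    (ε C : ℝ) (hε : 0 < ε) (hC : 0 < C)
    -- true nuisance parameters
    (g : ℝ → ℝ) (hg : Measurable g)
    (hgdef : (fun ω => g (Z ω)) =ᵐ[μ] μ[T | MeasurableSpace.comap Z inferInstance])
    (Q : ℝ → ℝ → ℝ) (hQmeas : ∀ t, Measurable (Q t))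
    -- structural model Y = Q(T,Z) + ζ with E[ζ | Z,T] = 0 and E[ζ² | Z] ≤ C a.s.
    (hmodel : ∀ ω, Y ω = Q (T ω) (Z ω) + ζ ω)
    (hζmean : μ[ζ | MeasurableSpace.comap (fun ω => (Z ω, T ω)) inferInstance] =ᵐ[μ] 0)
    (hζvar : ∀ᵐ ω ∂μ,
      (μ[fun ω' => ζ ω' ^ 2 | MeasurableSpace.comap Z inferInstance]) ω ≤ C)
    -- bounds on the propensity scores
    (hgbd : ∀ᵐ ω ∂μ, ε ≤ g (Z ω) ∧ g (Z ω) ≤ 1)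
    -- candidate nuisances
    (Q' : ℝ → ℝ → ℝ) (hQ'meas : ∀ t, Measurable (Q' t))
    (g' : ℝ → ℝ) (hg' : Measurable g')
    (hg'bd : ∀ᵐ ω ∂μ, ε ≤ g' (Z ω) ∧ g' (Z ω) ≤ 1 - ε)
    -- square integrability
    (hY2 : MemLp Y 2 μ) (hζ2 : MemLp ζ 2 μ)
    (hQ2 : ∀ t, t = 0 ∨ t = 1 → MemLp (fun ω => Q t (Z ω)) 2 μ)
    (hQ'2 : ∀ t, t = 0 ∨ t = 1 → MemLp (fun ω => Q' t (Z ω)) 2 μ) :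
    Real.sqrt (∫ ω, (T ω * (Y ω - Q' 1 (Z ω)) / g' (Z ω)
        - T ω * (Y ω - Q 1 (Z ω)) / g (Z ω)) ^ 2 ∂μ)
      ≤ ε ^ (-2 : ℤ) * (Real.sqrt (∫ ω, (Q' 1 (Z ω) - Q 1 (Z ω)) ^ 2 ∂μ)
          + Real.sqrt C * Real.sqrt (∫ ω, (g' (Z ω) - g (Z ω)) ^ 2 ∂μ)) := by
  classical
  set η : ℝ := ε⁻¹ with hη_def
  have hη0 : 0 < η := inv_pos.mpr hε
  -- ε ≤ 1 hence 1 ≤ η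
  have hε1 : ε ≤ 1 := by
    obtain ⟨ω, h1, h2⟩ := hg'bd.exists
    linarith
  have hη1 : (1 : ℝ) ≤ η := by
    rw [hη_def, ← one_div]
    exact one_le_one_div hε hε1
  -- the pieces
  set A : Ω → ℝ := fun ω => T ω * (Q 1 (Z ω) - Q' 1 (Z ω)) / g' (Z ω) with hA_def
  set B : Ω → ℝ := fun ω => T ω * ζ ω * (1 / g' (Z ω) - 1 / g (Z ω)) with hB_def
  have hqmeas : Measurable (fun ω => Q' 1 (Z ω) - Q 1 (Z ω)) :=
    ((hQ'meas 1).comp hZ).sub ((hQmeas 1).comp hZ)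
  have hq2 : MemLp (fun ω => Q' 1 (Z ω) - Q 1 (Z ω)) 2 μ :=
    (hQ'2 1 (Or.inr rfl)).sub (hQ2 1 (Or.inr rfl))
  have hAmeas : Measurable A :=
    (hT.mul (((hQmeas 1).comp hZ).sub ((hQ'meas 1).comp hZ))).div (hg'.comp hZ)
  have hBmeas : Measurable B :=
    (hT.mul hζ).mul ((measurable_const.div (hg'.comp hZ)).sub (measurable_const.div (hg.comp hZ)))
  have hTabs : ∀ ω, |T ω| ≤ 1 := by
    intro ω; rcases hTbin ω with h | h <;> simp [h]
  -- pointwise a.e. facts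
  have hDeq : ∀ᵐ ω ∂μ, T ω * (Y ω - Q' 1 (Z ω)) / g' (Z ω)
      - T ω * (Y ω - Q 1 (Z ω)) / g (Z ω) = A ω + B ω := by
    filter_upwards [hgbd, hg'bd] with ω hgω hg'ω
    have hg0 : g (Z ω) ≠ 0 := ne_of_gt (lt_of_lt_of_le hε hgω.1)
    have hg'0 : g' (Z ω) ≠ 0 := ne_of_gt (lt_of_lt_of_le hε hg'ω.1)
    rcases hTbin ω with h | h
    · simp [hA_def, hB_def, h]
    · simp only [hA_def, hB_def, hmodel ω, h, one_mul]
      field_simp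
      ring
  have hAbd : ∀ᵐ ω ∂μ, ‖A ω‖ ≤ ‖η * (Q' 1 (Z ω) - Q 1 (Z ω))‖ := by
    filter_upwards [hg'bd] with ω hg'ω
    have hg'pos : 0 < g' (Z ω) := lt_of_lt_of_le hε hg'ω.1
    have h1 : |A ω| = |T ω| * |Q 1 (Z ω) - Q' 1 (Z ω)| / g' (Z ω) := by
      rw [hA_def]; rw [abs_div, abs_mul, abs_of_pos hg'pos]
    have h2 : |Q 1 (Z ω) - Q' 1 (Z ω)| = |Q' 1 (Z ω) - Q 1 (Z ω)| := abs_sub_comm _ _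
    have h3 : (1 : ℝ) / g' (Z ω) ≤ η := by
      rw [hη_def]
      rw [div_le_iff₀ hg'pos, inv_mul_eq_div, le_div_iff₀ hε]
      nlinarith [hg'ω.1]
    simp only [Real.norm_eq_abs, abs_mul, abs_of_pos hη0]
    rw [h1, h2]
    rw [div_eq_mul_one_div]
    have := hTabs ω
    have habs : (0:ℝ) ≤ |Q' 1 (Z ω) - Q 1 (Z ω)| := abs_nonneg _
    calc |T ω| * |Q' 1 (Z ω) - Q 1 (Z ω)| * (1 / g' (Z ω))
        ≤ 1 * |Q' 1 (Z ω) - Q 1 (Z ω)| * η := by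
          apply mul_le_mul (mul_le_mul_of_nonneg_right this habs) h3 (by positivity) (by positivity)
      _ = η * |Q' 1 (Z ω) - Q 1 (Z ω)| := by ring
  have hBbd : ∀ᵐ ω ∂μ, ‖B ω‖ ≤ ‖(2 * η) * ζ ω‖ := by
    filter_upwards [hgbd, hg'bd] with ω hgω hg'ω
    have hgpos : 0 < g (Z ω) := lt_of_lt_of_le hε hgω.1
    have hg'pos : 0 < g' (Z ω) := lt_of_lt_of_le hε hg'ω.1
    have h3 : (1 : ℝ) / g' (Z ω) ≤ η := by
      rw [hη_def, div_le_iff₀ hg'pos, inv_mul_eq_div, le_div_iff₀ hε]; nlinarith [hg'ω.1]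
    have h4 : (1 : ℝ) / g (Z ω) ≤ η := by
      rw [hη_def, div_le_iff₀ hgpos, inv_mul_eq_div, le_div_iff₀ hε]; nlinarith [hgω.1]
    have h5 : |1 / g' (Z ω) - 1 / g (Z ω)| ≤ 2 * η := by
      rw [abs_sub_le_iff]
      constructor <;> nlinarith [one_div_pos.mpr hgpos, one_div_pos.mpr hg'pos]
    simp only [Real.norm_eq_abs, hB_def, abs_mul, abs_of_pos hη0, abs_two]
    calc |T ω| * |ζ ω| * |1 / g' (Z ω) - 1 / g (Z ω)|
        ≤ 1 * |ζ ω| * (2 * η) := by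
          apply mul_le_mul (mul_le_mul_of_nonneg_right (hTabs ω) (abs_nonneg _)) h5
            (abs_nonneg _) (by positivity)
      _ = 2 * η * |ζ ω| := by ring
  have hA2 : MemLp A 2 μ :=
    MemLp.of_le (hq2.const_mul η) hAmeas.aestronglyMeasurable hAbd
  have hB2 : MemLp B 2 μ :=
    MemLp.of_le (hζ2.const_mul (2 * η)) hBmeas.aestronglyMeasurable hBbd
  -- square bounds
  have hAsq : ∀ᵐ ω ∂μ, A ω ^ 2 ≤ η ^ 2 * (Q' 1 (Z ω) - Q 1 (Z ω)) ^ 2 := by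
    filter_upwards [hAbd] with ω h
    have h' : |A ω| ≤ η * |Q' 1 (Z ω) - Q 1 (Z ω)| := by
      simpa [Real.norm_eq_abs, abs_mul, abs_of_pos hη0] using h
    calc A ω ^ 2 = |A ω| ^ 2 := (sq_abs _).symm
      _ ≤ (η * |Q' 1 (Z ω) - Q 1 (Z ω)|) ^ 2 :=
          pow_le_pow_left₀ (abs_nonneg _) h' 2
      _ = η ^ 2 * (Q' 1 (Z ω) - Q 1 (Z ω)) ^ 2 := by rw [mul_pow, sq_abs]
  have hBsq : ∀ᵐ ω ∂μ, B ω ^ 2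
      ≤ η ^ 4 * ((g' (Z ω) - g (Z ω)) ^ 2 * ζ ω ^ 2) := by
    filter_upwards [hgbd, hg'bd] with ω hgω hg'ω
    have hgpos : 0 < g (Z ω) := lt_of_lt_of_le hε hgω.1
    have hg'pos : 0 < g' (Z ω) := lt_of_lt_of_le hε hg'ω.1
    have hdiff : 1 / g' (Z ω) - 1 / g (Z ω)
        = (g (Z ω) - g' (Z ω)) / (g' (Z ω) * g (Z ω)) := by
      rw [div_sub_div _ _ (ne_of_gt hg'pos) (ne_of_gt hgpos), one_mul, mul_one]
    have hBsq' : B ω ^ 2 = T ω ^ 2 * ζ ω ^ 2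
        * ((g (Z ω) - g' (Z ω)) ^ 2 / (g' (Z ω) * g (Z ω)) ^ 2) := by
      rw [hB_def]; simp only []
      rw [hdiff]; ring
    have hT2 : T ω ^ 2 ≤ 1 := by
      rcases hTbin ω with h | h <;> simp [h]
    have hd : ε * ε ≤ g' (Z ω) * g (Z ω) :=
      mul_le_mul hg'ω.1 hgω.1 hε.le (le_trans hε.le hg'ω.1)
    have hden2 : ε ^ 4 ≤ (g' (Z ω) * g (Z ω)) ^ 2 := by
      calc ε ^ 4 = (ε * ε) ^ 2 := by ring
        _ ≤ (g' (Z ω) * g (Z ω)) ^ 2 := pow_le_pow_left₀ (by positivity) hd 2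
    have hfrac : (g (Z ω) - g' (Z ω)) ^ 2 / (g' (Z ω) * g (Z ω)) ^ 2
        ≤ η ^ 4 * (g' (Z ω) - g (Z ω)) ^ 2 := by
      rw [div_le_iff₀ (by positivity)]
      have hsymm : (g (Z ω) - g' (Z ω)) ^ 2 = (g' (Z ω) - g (Z ω)) ^ 2 := by ring
      rw [hsymm]
      have h1 : η ^ 4 * ε ^ 4 = 1 := by
        rw [hη_def]; field_simp
      have h2 : η ^ 4 * (g' (Z ω) - g (Z ω)) ^ 2 * ε ^ 4
          ≤ η ^ 4 * (g' (Z ω) - g (Z ω)) ^ 2 * (g' (Z ω) * g (Z ω)) ^ 2 :=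
        mul_le_mul_of_nonneg_left hden2 (by positivity)
      have h3 : η ^ 4 * (g' (Z ω) - g (Z ω)) ^ 2 * ε ^ 4 = (g' (Z ω) - g (Z ω)) ^ 2 := by
        linear_combination (g' (Z ω) - g (Z ω)) ^ 2 * h1
      linarith
    calc B ω ^ 2 = T ω ^ 2 * ζ ω ^ 2
          * ((g (Z ω) - g' (Z ω)) ^ 2 / (g' (Z ω) * g (Z ω)) ^ 2) := hBsq'
      _ ≤ 1 * ζ ω ^ 2 * (η ^ 4 * (g' (Z ω) - g (Z ω)) ^ 2) := by
          apply mul_le_mul (mul_le_mul_of_nonneg_right hT2 (sq_nonneg _)) hfrac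
            (by positivity) (by positivity)
      _ = η ^ 4 * ((g' (Z ω) - g (Z ω)) ^ 2 * ζ ω ^ 2) := by ring
  -- conditional expectation step : ∫ w ζ² ≤ C ∫ w
  set w : Ω → ℝ := fun ω => (g' (Z ω) - g (Z ω)) ^ 2 with hw_def
  have hwmeas : Measurable w := ((hg'.comp hZ).sub (hg.comp hZ)).pow_const 2
  have hwbd : ∀ᵐ ω ∂μ, ‖w ω‖ ≤ 4 := by
    filter_upwards [hgbd, hg'bd] with ω hgω hg'ω
    have : |g' (Z ω) - g (Z ω)| ≤ 2 := by
      rw [abs_sub_le_iff]; constructor <;> nlinarith [hgω.1, hgω.2, hg'ω.1, hg'ω.2, hε]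
    rw [hw_def]
    simp only [Real.norm_eq_abs, abs_pow]
    calc |g' (Z ω) - g (Z ω)| ^ 2 ≤ 2 ^ 2 := pow_le_pow_left₀ (abs_nonneg _) this 2
      _ = 4 := by norm_num
  have hwint : Integrable w μ :=
    (MemLp.of_bound hwmeas.aestronglyMeasurable 4 hwbd).integrable le_rfl
  have hζsq : Integrable (fun ω => ζ ω ^ 2) μ := hζ2.integrable_sq
  have hwζ : Integrable (fun ω => w ω * ζ ω ^ 2) μ :=
    hζsq.bdd_mul hwmeas.aestronglyMeasurable hwbd
  have hm : MeasurableSpace.comap Z inferInstance ≤ (inferInstance : MeasurableSpace Ω) :=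
    hZ.comap_le
  haveI : SigmaFinite (μ.trim hm) := by infer_instance
  have hwm : StronglyMeasurable[MeasurableSpace.comap Z inferInstance] w := by
    refine Measurable.stronglyMeasurable ?_
    exact Measurable.comp (f := Z) (g := fun x => (g' x - g x) ^ 2)
      ((hg'.sub hg).pow_const 2) (comap_measurable Z)
  have hpull : μ[w * (fun ω => ζ ω ^ 2) | MeasurableSpace.comap Z inferInstance] =ᵐ[μ] w * μ[(fun ω => ζ ω ^ 2) | MeasurableSpace.comap Z inferInstance] :=
    condExp_mul_of_stronglyMeasurable_left hwm (by exact hwζ) hζsq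
  have hkey : ∫ ω, w ω * ζ ω ^ 2 ∂μ ≤ C * ∫ ω, w ω ∂μ := by
    have e1 : ∫ ω, w ω * ζ ω ^ 2 ∂μ = ∫ ω, (μ[w * (fun ω' => ζ ω' ^ 2) | MeasurableSpace.comap Z inferInstance]) ω ∂μ :=
      (integral_condExp hm (f := w * fun ω' => ζ ω' ^ 2)).symm
    have e2 : ∫ ω, (μ[w * (fun ω' => ζ ω' ^ 2) | MeasurableSpace.comap Z inferInstance]) ω ∂μ
        = ∫ ω, w ω * (μ[(fun ω' => ζ ω' ^ 2) | MeasurableSpace.comap Z inferInstance]) ω ∂μ := by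
      refine integral_congr_ae ?_
      filter_upwards [hpull] with ω h
      simpa using h
    have e3 : ∫ ω, w ω * (μ[(fun ω' => ζ ω' ^ 2) | MeasurableSpace.comap Z inferInstance]) ω ∂μ ≤ ∫ ω, C * w ω ∂μ := by
      refine integral_mono_ae ?_ (hwint.const_mul C) ?_
      · exact integrable_condExp.bdd_mul hwmeas.aestronglyMeasurable hwbd
      · filter_upwards [hζvar] with ω h
        have hw0 : 0 ≤ w ω := by rw [hw_def]; positivity
        calc w ω * (μ[(fun ω' => ζ ω' ^ 2) | MeasurableSpace.comap Z inferInstance]) ω ≤ w ω * C :=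
              mul_le_mul_of_nonneg_left h hw0
          _ = C * w ω := mul_comm _ _
    rw [e1, e2]
    calc ∫ ω, w ω * (μ[(fun ω' => ζ ω' ^ 2) | MeasurableSpace.comap Z inferInstance]) ω ∂μ ≤ ∫ ω, C * w ω ∂μ := e3
      _ = C * ∫ ω, w ω ∂μ := integral_const_mul C w
  -- integral bounds
  have hq_int : Integrable (fun ω => (Q' 1 (Z ω) - Q 1 (Z ω)) ^ 2) μ := hq2.integrable_sq
  have hIA : ∫ ω, A ω ^ 2 ∂μ ≤ η ^ 2 * ∫ ω, (Q' 1 (Z ω) - Q 1 (Z ω)) ^ 2 ∂μ := by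
    have := integral_mono_ae hA2.integrable_sq (hq_int.const_mul (η ^ 2)) hAsq
    calc ∫ ω, A ω ^ 2 ∂μ ≤ ∫ ω, η ^ 2 * (Q' 1 (Z ω) - Q 1 (Z ω)) ^ 2 ∂μ := this
      _ = η ^ 2 * ∫ ω, (Q' 1 (Z ω) - Q 1 (Z ω)) ^ 2 ∂μ := integral_const_mul _ _
  have hIB : ∫ ω, B ω ^ 2 ∂μ ≤ η ^ 4 * (C * ∫ ω, w ω ∂μ) := by
    have h1 : ∫ ω, B ω ^ 2 ∂μ ≤ ∫ ω, η ^ 4 * (w ω * ζ ω ^ 2) ∂μ := by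
      refine integral_mono_ae hB2.integrable_sq (hwζ.const_mul (η ^ 4)) ?_
      filter_upwards [hBsq] with ω h
      simpa [hw_def] using h
    calc ∫ ω, B ω ^ 2 ∂μ ≤ ∫ ω, η ^ 4 * (w ω * ζ ω ^ 2) ∂μ := h1
      _ = η ^ 4 * ∫ ω, w ω * ζ ω ^ 2 ∂μ := integral_const_mul _ _
      _ ≤ η ^ 4 * (C * ∫ ω, w ω ∂μ) := by
          exact mul_le_mul_of_nonneg_left hkey (by positivity)
  -- assemble
  have hD_int : ∫ ω, (T ω * (Y ω - Q' 1 (Z ω)) / g' (Z ω)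
      - T ω * (Y ω - Q 1 (Z ω)) / g (Z ω)) ^ 2 ∂μ = ∫ ω, (A ω + B ω) ^ 2 ∂μ := by
    refine integral_congr_ae ?_
    filter_upwards [hDeq] with ω h
    rw [h]
  have hq_nonneg : 0 ≤ ∫ ω, (Q' 1 (Z ω) - Q 1 (Z ω)) ^ 2 ∂μ :=
    integral_nonneg fun ω => sq_nonneg _
  have hw_nonneg : 0 ≤ ∫ ω, w ω ∂μ := integral_nonneg fun ω => sq_nonneg _
  have step1 : Real.sqrt (∫ ω, (A ω + B ω) ^ 2 ∂μ)
      ≤ Real.sqrt (∫ ω, A ω ^ 2 ∂μ) + Real.sqrt (∫ ω, B ω ^ 2 ∂μ) :=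
    sqrt_integral_add_sq_le hA2 hB2
  have stepA : Real.sqrt (∫ ω, A ω ^ 2 ∂μ)
      ≤ η * Real.sqrt (∫ ω, (Q' 1 (Z ω) - Q 1 (Z ω)) ^ 2 ∂μ) := by
    calc Real.sqrt (∫ ω, A ω ^ 2 ∂μ)
        ≤ Real.sqrt (η ^ 2 * ∫ ω, (Q' 1 (Z ω) - Q 1 (Z ω)) ^ 2 ∂μ) :=
          Real.sqrt_le_sqrt hIA
      _ = η * Real.sqrt (∫ ω, (Q' 1 (Z ω) - Q 1 (Z ω)) ^ 2 ∂μ) := by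
          rw [Real.sqrt_mul (by positivity), Real.sqrt_sq hη0.le]
  have stepB : Real.sqrt (∫ ω, B ω ^ 2 ∂μ)
      ≤ η ^ 2 * (Real.sqrt C * Real.sqrt (∫ ω, w ω ∂μ)) := by
    calc Real.sqrt (∫ ω, B ω ^ 2 ∂μ)
        ≤ Real.sqrt (η ^ 4 * (C * ∫ ω, w ω ∂μ)) := Real.sqrt_le_sqrt hIB
      _ = η ^ 2 * (Real.sqrt C * Real.sqrt (∫ ω, w ω ∂μ)) := by
          rw [Real.sqrt_mul (by positivity), Real.sqrt_mul hC.le]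
          congr 1
          rw [show η ^ 4 = (η ^ 2) ^ 2 by ring, Real.sqrt_sq (by positivity)]
  have hεpow : (ε : ℝ) ^ (-2 : ℤ) = η ^ 2 := by
    rw [hη_def, zpow_neg, inv_pow, ← zpow_natCast ε 2]
    norm_num
  rw [hD_int, hεpow]
  have hX0 : 0 ≤ Real.sqrt (∫ ω, (Q' 1 (Z ω) - Q 1 (Z ω)) ^ 2 ∂μ) := Real.sqrt_nonneg _
  have hηle : η ≤ η ^ 2 := by nlinarith
  calc Real.sqrt (∫ ω, (A ω + B ω) ^ 2 ∂μ)
      ≤ Real.sqrt (∫ ω, A ω ^ 2 ∂μ) + Real.sqrt (∫ ω, B ω ^ 2 ∂μ) := step1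
    _ ≤ η * Real.sqrt (∫ ω, (Q' 1 (Z ω) - Q 1 (Z ω)) ^ 2 ∂μ)
        + η ^ 2 * (Real.sqrt C * Real.sqrt (∫ ω, w ω ∂μ)) := add_le_add stepA stepB
    _ ≤ η ^ 2 * Real.sqrt (∫ ω, (Q' 1 (Z ω) - Q 1 (Z ω)) ^ 2 ∂μ)
        + η ^ 2 * (Real.sqrt C * Real.sqrt (∫ ω, w ω ∂μ)) := by
          exact add_le_add_left (mul_le_mul_of_nonneg_right hηle hX0) _
    _ = η ^ 2 * (Real.sqrt (∫ ω, (Q' 1 (Z ω) - Q 1 (Z ω)) ^ 2 ∂μ)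
        + Real.sqrt C * Real.sqrt (∫ ω, (g' (Z ω) - g (Z ω)) ^ 2 ∂μ)) := by
          rw [hw_def]; ring
end

section
/- Variance of the efficient score: under Y = Q(T,Z) + ζ with E[ζ|T,Z] = 0, the variance of φ₀ = (T/g(Z))(Y−Q(1,Z)) − ((1−T)/(1−g(Z)))(Y−Q(0,Z)) + Q(1,Z) − Q(0,Z) − ψ₀ decomposes as E[φ₀²] = E[ζ²·(T/g(Z)² + (1−T)/(1−g(Z))²)] + Var(Q(1,Z) − Q(0,Z)). -/
/-!
Writing `w(t, p) = t / p - (1 - t) / (1 - p)` for the inverse-propensity weight, the model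
`Y = Q(T, Z) + ζ` and `T ∈ {0, 1}` turn the efficient score into `φ₀ = w(T, g(Z)) ζ + B` with
`B = Q(1, Z) - Q(0, Z) - ψ₀`, and `w(T, g(Z))² = T / g(Z)² + (1 - T) / (1 - g(Z))²`. Since
`w(T, g(Z)) B` is `(T, Z)`-measurable and `E[ζ | T, Z] = 0`, the cross term `E[w B ζ]` vanishes,
which leaves `E[φ₀²] = E[w² ζ²] + E[B²]`. Overlap `ε ≤ g ≤ 1 - ε` bounds `w` by `1 / ε`, which is
what puts both summands in `L²`.
-/

open MeasureTheory

section Orthogonality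

variable {Ω : Type*} {m m₀ : MeasurableSpace Ω} {μ : Measure Ω}

theorem integral_mul_eq_zero_of_condExp_eq_zero [IsFiniteMeasure μ] (hm : m ≤ m₀)
    {f ζ : Ω → ℝ} (hf : StronglyMeasurable[m] f) (hfζ : Integrable (f * ζ) μ)
    (hζ : Integrable ζ μ) (hζm : μ[ζ | m] =ᵐ[μ] 0) :
    ∫ ω, f ω * ζ ω ∂μ = 0 := by
  have hcond : μ[f * ζ | m] =ᵐ[μ] 0 := by
    filter_upwards [condExp_mul_of_stronglyMeasurable_left hf hfζ hζ, hζm] with ω hω hζω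
    simp [hω, hζω]
  calc ∫ ω, f ω * ζ ω ∂μ = ∫ ω, (μ[f * ζ | m]) ω ∂μ := (integral_condExp hm).symm
    _ = 0 := by simp [integral_congr_ae hcond]

theorem integral_add_sq_of_integral_mul_eq_zero {a b : Ω → ℝ} (ha : MemLp a 2 μ)
    (hb : MemLp b 2 μ) (hab : ∫ ω, a ω * b ω ∂μ = 0) :
    ∫ ω, (a ω + b ω) ^ 2 ∂μ = ∫ ω, a ω ^ 2 ∂μ + ∫ ω, b ω ^ 2 ∂μ := by
  have hab_int : Integrable (fun ω => 2 * (a ω * b ω)) μ := (ha.integrable_mul hb).const_mul 2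
  calc ∫ ω, (a ω + b ω) ^ 2 ∂μ = ∫ ω, a ω ^ 2 + 2 * (a ω * b ω) + b ω ^ 2 ∂μ := by
        congr 1; ext ω; ring
    _ = ∫ ω, a ω ^ 2 ∂μ + ∫ ω, b ω ^ 2 ∂μ := by
        rw [integral_add (f := fun ω => a ω ^ 2 + 2 * (a ω * b ω))
            (ha.integrable_sq.add hab_int) hb.integrable_sq,
          integral_add ha.integrable_sq hab_int, integral_const_mul, hab, mul_zero, add_zero]

end Orthogonality

section IPWWeight

noncomputable def ipwWeight (t p : ℝ) : ℝ := t / p - (1 - t) / (1 - p)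

variable {t : ℝ}

theorem measurable_ipwWeight : Measurable (Function.uncurry ipwWeight) := by
  unfold ipwWeight Function.uncurry
  fun_prop

theorem ipwWeight_mul_residual (ht : t = 0 ∨ t = 1) (p z : ℝ) (q : ℝ → ℝ) :
    t / p * (q t + z - q 1) - (1 - t) / (1 - p) * (q t + z - q 0) = ipwWeight t p * z := by
  rcases ht with rfl | rfl <;> simp [ipwWeight]

theorem ipwWeight_sq (ht : t = 0 ∨ t = 1) (p : ℝ) :
    ipwWeight t p ^ 2 = t / p ^ 2 + (1 - t) / (1 - p) ^ 2 := by
  rcases ht with rfl | rfl <;> simp [ipwWeight]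

theorem abs_ipwWeight_le (ht : t = 0 ∨ t = 1) {ε p : ℝ} (hε : 0 < ε) (hεp : ε ≤ p)
    (hp : p ≤ 1 - ε) : |ipwWeight t p| ≤ 1 / ε := by
  rcases ht with rfl | rfl
  · have : 1 / (1 - p) ≤ 1 / ε := one_div_le_one_div_of_le hε (by linarith)
    simpa [ipwWeight, abs_of_pos (show 0 < 1 - p by linarith)] using this
  · have : 1 / p ≤ 1 / ε := one_div_le_one_div_of_le hε hεp
    simpa [ipwWeight, abs_of_pos (show 0 < p by linarith)] using this

end IPWWeight

theorem stmt13_general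
    {Ω : Type*} [MeasurableSpace Ω]
    (μ : Measure Ω) [IsProbabilityMeasure μ]
    (Y T Z ζ : Ω → ℝ)
    (hT : Measurable T) (hZ : Measurable Z)
    (hTbin : ∀ ω, T ω = 0 ∨ T ω = 1)
    (ε : ℝ) (hε : 0 < ε)
    (g : ℝ → ℝ) (hg : Measurable g)
    (hpos : ∀ᵐ ω ∂μ, ε ≤ g (Z ω) ∧ g (Z ω) ≤ 1 - ε)
    (Q : ℝ → ℝ → ℝ) (hQmeas : ∀ t, Measurable (Q t))
    (hmodel : ∀ ω, Y ω = Q (T ω) (Z ω) + ζ ω)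
    (hζmean : μ[ζ | MeasurableSpace.comap (fun ω => (T ω, Z ω)) inferInstance] =ᵐ[μ] 0)
    (hζ2 : MemLp ζ 2 μ)
    (hQ2 : ∀ t, t = 0 ∨ t = 1 → MemLp (fun ω => Q t (Z ω)) 2 μ)
    (ψ₀ : ℝ) :
    ∫ ω, (T ω / g (Z ω) * (Y ω - Q 1 (Z ω))
        - (1 - T ω) / (1 - g (Z ω)) * (Y ω - Q 0 (Z ω))
        + (Q 1 (Z ω) - Q 0 (Z ω)) - ψ₀) ^ 2 ∂μ
      = ∫ ω, ζ ω ^ 2 * (T ω / g (Z ω) ^ 2 + (1 - T ω) / (1 - g (Z ω)) ^ 2) ∂μ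
        + ∫ ω, ((Q 1 (Z ω) - Q 0 (Z ω)) - ψ₀) ^ 2 ∂μ := by
  set F : ℝ × ℝ → ℝ := fun x => ipwWeight x.1 (g x.2) * (Q 1 x.2 - Q 0 x.2 - ψ₀)
  set w : Ω → ℝ := fun ω => ipwWeight (T ω) (g (Z ω))
  set B : Ω → ℝ := fun ω => Q 1 (Z ω) - Q 0 (Z ω) - ψ₀
  have hw : MemLp w ⊤ μ := by
    refine .of_bound (measurable_ipwWeight.comp (hT.prodMk (hg.comp hZ))).aestronglyMeasurable
      (1 / ε) ?_
    filter_upwards [hpos] with ω ⟨hεg, hg1⟩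
    exact abs_ipwWeight_le (hTbin ω) hε hεg hg1
  have hB : MemLp B 2 μ := ((hQ2 1 (.inr rfl)).sub (hQ2 0 (.inl rfl))).sub (memLp_const ψ₀)
  have hF : Measurable F := by
    have := hQmeas 0; have := hQmeas 1
    unfold F ipwWeight; fun_prop
  have horth : ∫ ω, (w ω * ζ ω) * B ω ∂μ = 0 := by
    have := integral_mul_eq_zero_of_condExp_eq_zero (hT.prodMk hZ).comap_le
      (hF.comp (comap_measurable _)).stronglyMeasurable ((hB.mul (r := 2) hw).integrable_mul hζ2)
      (hζ2.integrable one_le_two) hζmean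
    simpa [F, w, B, mul_comm, mul_left_comm, mul_assoc] using this
  have hscore : ∀ ω, T ω / g (Z ω) * (Y ω - Q 1 (Z ω))
      - (1 - T ω) / (1 - g (Z ω)) * (Y ω - Q 0 (Z ω)) + (Q 1 (Z ω) - Q 0 (Z ω)) - ψ₀
      = w ω * ζ ω + B ω := fun ω => by
    rw [hmodel, ← ipwWeight_mul_residual (hTbin ω) _ _ (Q · (Z ω))]; ring
  have hweight : ∀ ω, ζ ω ^ 2 * (T ω / g (Z ω) ^ 2 + (1 - T ω) / (1 - g (Z ω)) ^ 2)
      = (w ω * ζ ω) ^ 2 := fun ω => by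
    rw [mul_pow, ipwWeight_sq (hTbin ω), mul_comm]
  simp_rw [hscore, hweight]
  exact integral_add_sq_of_integral_mul_eq_zero (hζ2.mul (r := 2) hw) hB horth

/-- Variance decomposition of the efficient score: with `Y = Q(T,Z) + ζ` and
`E[ζ | T,Z] = 0`, the second moment of the efficient score
`φ₀ = (T/g(Z))(Y - Q(1,Z)) - ((1-T)/(1-g(Z)))(Y - Q(0,Z)) + Q(1,Z) - Q(0,Z) - ψ₀`
equals `E[ζ²·(T/g(Z)² + (1-T)/(1-g(Z))²)] + Var(Q(1,Z) - Q(0,Z))`. -/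
theorem stmt13
    {Ω : Type*} [MeasurableSpace Ω]
    (μ : Measure Ω) [IsProbabilityMeasure μ]
    (Y T Z ζ : Ω → ℝ)
    (hY : Measurable Y) (hT : Measurable T) (hZ : Measurable Z) (hζ : Measurable ζ)
    (hTbin : ∀ ω, T ω = 0 ∨ T ω = 1)
    (ε : ℝ) (hε : 0 < ε)
    (g : ℝ → ℝ) (hg : Measurable g)
    (hgdef : (fun ω => g (Z ω)) =ᵐ[μ] μ[T | MeasurableSpace.comap Z inferInstance])
    (hpos : ∀ᵐ ω ∂μ, ε ≤ g (Z ω) ∧ g (Z ω) ≤ 1 - ε)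
    (Q : ℝ → ℝ → ℝ) (hQmeas : ∀ t, Measurable (Q t))
    (hmodel : ∀ ω, Y ω = Q (T ω) (Z ω) + ζ ω)
    (hζmean : μ[ζ | MeasurableSpace.comap (fun ω => (T ω, Z ω)) inferInstance] =ᵐ[μ] 0)
    (hζ2 : MemLp ζ 2 μ)
    (hQ2 : ∀ t, t = 0 ∨ t = 1 → MemLp (fun ω => Q t (Z ω)) 2 μ)
    (hY2 : MemLp Y 2 μ)
    (ψ₀ : ℝ) (hψ₀ : ψ₀ = ∫ ω, (Q 1 (Z ω) - Q 0 (Z ω)) ∂μ) :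
    ∫ ω, (T ω / g (Z ω) * (Y ω - Q 1 (Z ω))
        - (1 - T ω) / (1 - g (Z ω)) * (Y ω - Q 0 (Z ω))
        + (Q 1 (Z ω) - Q 0 (Z ω)) - ψ₀) ^ 2 ∂μ
      = ∫ ω, ζ ω ^ 2 * (T ω / g (Z ω) ^ 2 + (1 - T ω) / (1 - g (Z ω)) ^ 2) ∂μ
        + ∫ ω, ((Q 1 (Z ω) - Q 0 (Z ω)) - ψ₀) ^ 2 ∂μ :=
  stmt13_general μ Y T Z ζ hT hZ hTbin ε hε g hg hpos Q hQmeas hmodel hζmean hζ2 hQ2 ψ₀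
end

section
/- If estimators of the nuisance parameters satisfy ‖Q̃_n(d,·)−Q(d,·)‖_{P,2} → 0 for d ∈ {0,1} and ‖g̃_n−g‖_{P,2} → 0, with ε ≤ g̃_n ≤ 1−ε a.s. uniformly in n, E[ζ²|Z] ≤ C a.s., and g(Z) ≤ 1 a.s., then ‖φ(W;ψ₀,Q̃_n,g̃_n) − φ(W;ψ₀,Q,g)‖_{P,2} → 0. -/
open MeasureTheory ProbabilityTheory Filter


set_option maxHeartbeats 1000000 in
lemma stmt15_three_sq (x y w : ℝ) : (x + y - w) ^ 2 ≤ 3 * (x ^ 2 + y ^ 2 + w ^ 2) := by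
  nlinarith [sq_nonneg (x - y), sq_nonneg (x + w), sq_nonneg (y + w)]

set_option maxHeartbeats 1000000 in
lemma stmt15_sq_bound3 (ε z a a' d1 d0 : ℝ) (hε : 0 < ε) (hε2 : ε ≤ 1/2)
    (ha : ε ≤ a) (ha1 : a ≤ 1 - ε) (ha' : ε ≤ a') (ha'1 : a' ≤ 1 - ε) :
    (z * (a - a') / (a * a') + d1 * (1 - 1 / a') - d0) ^ 2
      ≤ 3 / ε ^ 4 * (z ^ 2 * (a' - a) ^ 2 + d1 ^ 2 + d0 ^ 2) := by
  have ha0 : 0 < a := lt_of_lt_of_le hε ha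
  have ha'0 : 0 < a' := lt_of_lt_of_le hε ha'
  have hε4 : (0:ℝ) < ε ^ 4 := by positivity
  set u := z * (a - a') / (a * a') with hu_def
  set v := d1 * (1 - 1 / a') with hv_def
  have hu : u ^ 2 ≤ z ^ 2 * (a' - a) ^ 2 / ε ^ 4 := by
    have h1 : u ^ 2 = (z * (a - a')) ^ 2 / (a * a') ^ 2 := by
      rw [hu_def, div_pow]
    have hp : ε * ε ≤ a * a' := mul_le_mul ha ha' hε.le ha0.le
    have h2 : ε ^ 4 ≤ (a * a') ^ 2 := by
      nlinarith [mul_le_mul hp hp (by positivity : (0:ℝ) ≤ ε * ε) (by positivity : (0:ℝ) ≤ a * a')]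
    calc u ^ 2 = (z * (a - a')) ^ 2 / (a * a') ^ 2 := h1
      _ ≤ (z * (a - a')) ^ 2 / ε ^ 4 :=
          div_le_div_of_nonneg_left (by positivity) hε4 h2
      _ = z ^ 2 * (a' - a) ^ 2 / ε ^ 4 := by ring
  have hv : v ^ 2 ≤ d1 ^ 2 / ε ^ 4 := by
    have h1 : (1 - 1 / a') ^ 2 * ε ^ 4 ≤ 1 := by
      have h2 : (1 - 1 / a') = (a' - 1) / a' := by field_simp
      rw [h2, div_pow, div_mul_eq_mul_div, div_le_one (by positivity)]
      have e1 : (a' - 1) ^ 2 ≤ 1 := by nlinarith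
      have hsq : ε ^ 2 ≤ 1 := by nlinarith
      have e2 : ε ^ 4 ≤ ε ^ 2 := by nlinarith [mul_le_mul_of_nonneg_left hsq (sq_nonneg ε)]
      have e3 : ε ^ 2 ≤ a' ^ 2 := by nlinarith
      nlinarith [mul_le_mul e1 e2 (by positivity : (0:ℝ) ≤ ε ^ 4) zero_le_one]
    have h3 : v ^ 2 = d1 ^ 2 * (1 - 1 / a') ^ 2 := by rw [hv_def]; ring
    rw [h3, le_div_iff₀ hε4]
    nlinarith [sq_nonneg d1]
  have hd : d0 ^ 2 ≤ d0 ^ 2 / ε ^ 4 := by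
    rw [le_div_iff₀ hε4]
    have hsq : ε ^ 2 ≤ 1 := by nlinarith
    have e4 : ε ^ 4 ≤ 1 := by nlinarith [mul_le_mul_of_nonneg_left hsq (sq_nonneg ε)]
    nlinarith [mul_le_mul_of_nonneg_left e4 (sq_nonneg d0)]
  clear hu_def hv_def
  clear_value u v
  have h3 : (u + v - d0) ^ 2 ≤ 3 * (u ^ 2 + v ^ 2 + d0 ^ 2) := stmt15_three_sq u v d0
  calc (u + v - d0) ^ 2 ≤ 3 * (u ^ 2 + v ^ 2 + d0 ^ 2) := h3
    _ ≤ 3 * (z ^ 2 * (a' - a) ^ 2 / ε ^ 4 + d1 ^ 2 / ε ^ 4 + d0 ^ 2 / ε ^ 4) := by linarith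
    _ = 3 / ε ^ 4 * (z ^ 2 * (a' - a) ^ 2 + d1 ^ 2 + d0 ^ 2) := by field_simp

set_option maxHeartbeats 2000000 in
/-- Consistency of nuisance estimation transfers to the score: if
`‖Q̃_n(d,·) - Q(d,·)‖₂ → 0` for `d ∈ {0,1}` and `‖g̃_n - g‖₂ → 0`, with `ε ≤ g̃_n ≤ 1-ε` a.s.
uniformly in `n`, `E[ζ² | Z] ≤ C` a.s., and `g(Z) ≤ 1` a.s., then
`‖φ(W; ψ₀, Q̃_n, g̃_n) - φ(W; ψ₀, Q, g)‖₂ → 0`. -/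
theorem stmt15
    {Ω : Type*} [MeasurableSpace Ω]
    (μ : Measure Ω) [IsProbabilityMeasure μ]
    (Y T Z ζ : Ω → ℝ)
    (hY : Measurable Y) (hT : Measurable T) (hZ : Measurable Z) (hζ : Measurable ζ)
    (hTbin : ∀ ω, T ω = 0 ∨ T ω = 1)
    (ε C : ℝ) (hε : 0 < ε) (hC : 0 < C)
    -- true nuisances
    (g : ℝ → ℝ) (hg : Measurable g)
    (hgdef : (fun ω => g (Z ω)) =ᵐ[μ] μ[T | MeasurableSpace.comap Z inferInstance])
    (hgbd : ∀ᵐ ω ∂μ, ε ≤ g (Z ω) ∧ g (Z ω) ≤ 1 - ε)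
    (Q : ℝ → ℝ → ℝ) (hQmeas : ∀ t, Measurable (Q t))
    (hmodel : ∀ ω, Y ω = Q (T ω) (Z ω) + ζ ω)
    (hζmean : μ[ζ | MeasurableSpace.comap (fun ω => (T ω, Z ω)) inferInstance] =ᵐ[μ] 0)
    (hζvar : ∀ᵐ ω ∂μ,
      (μ[fun ω' => ζ ω' ^ 2 | MeasurableSpace.comap Z inferInstance]) ω ≤ C)
    -- sequences of nuisance estimates
    (Q' : ℕ → ℝ → ℝ → ℝ) (hQ'meas : ∀ n t, Measurable (Q' n t))
    (g' : ℕ → ℝ → ℝ) (hg' : ∀ n, Measurable (g' n))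
    (hg'bd : ∀ n, ∀ᵐ ω ∂μ, ε ≤ g' n (Z ω) ∧ g' n (Z ω) ≤ 1 - ε)
    -- square integrability
    (hY2 : MemLp Y 2 μ) (hζ2 : MemLp ζ 2 μ)
    (hQ2 : ∀ t, t = 0 ∨ t = 1 → MemLp (fun ω => Q t (Z ω)) 2 μ)
    (hQ'2 : ∀ n, ∀ t, t = 0 ∨ t = 1 → MemLp (fun ω => Q' n t (Z ω)) 2 μ)
    -- L² consistency of the nuisance estimators
    (hQconv : ∀ d : ℝ, d = 0 ∨ d = 1 →
      Tendsto (fun n => Real.sqrt (∫ ω, (Q' n d (Z ω) - Q d (Z ω)) ^ 2 ∂μ)) atTop (nhds 0))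
    (hgconv : Tendsto (fun n => Real.sqrt (∫ ω, (g' n (Z ω) - g (Z ω)) ^ 2 ∂μ)) atTop (nhds 0))
    (ψ₀ : ℝ) (hψ₀ : ψ₀ = ∫ ω, (Q 1 (Z ω) - Q 0 (Z ω)) ∂μ) :
    Tendsto (fun n => Real.sqrt (∫ ω,
        ((T ω / g' n (Z ω) * (Y ω - Q' n 1 (Z ω))
            - (1 - T ω) / (1 - g' n (Z ω)) * (Y ω - Q' n 0 (Z ω))
            + (Q' n 1 (Z ω) - Q' n 0 (Z ω)) - ψ₀)
          - (T ω / g (Z ω) * (Y ω - Q 1 (Z ω))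
            - (1 - T ω) / (1 - g (Z ω)) * (Y ω - Q 0 (Z ω))
            + (Q 1 (Z ω) - Q 0 (Z ω)) - ψ₀)) ^ 2 ∂μ)) atTop (nhds 0) := by
  -- basic setup
  have hm : MeasurableSpace.comap Z inferInstance ≤ ‹MeasurableSpace Ω› :=
    measurable_iff_comap_le.mp hZ
  haveI : (ae μ).NeBot := ae_neBot.mpr (IsProbabilityMeasure.ne_zero μ)
  obtain ⟨ω₀, hω1, hω2⟩ := hgbd.exists
  have hε2 : ε ≤ 1 / 2 := by linarith
  -- convergence of the squared L² distances
  have hsqr : ∀ f : ℕ → ℝ, (∀ n, 0 ≤ f n) →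
      Tendsto (fun n => Real.sqrt (f n)) atTop (nhds 0) → Tendsto f atTop (nhds 0) := by
    intro f hf h
    have h2 := h.mul h
    rw [mul_zero] at h2
    exact h2.congr fun n => Real.mul_self_sqrt (hf n)
  have Ig : Tendsto (fun n => ∫ ω, (g' n (Z ω) - g (Z ω)) ^ 2 ∂μ) atTop (nhds 0) :=
    hsqr _ (fun n => integral_nonneg fun ω => sq_nonneg _) hgconv
  have I1 : Tendsto (fun n => ∫ ω, (Q' n 1 (Z ω) - Q 1 (Z ω)) ^ 2 ∂μ) atTop (nhds 0) :=
    hsqr _ (fun n => integral_nonneg fun ω => sq_nonneg _) (hQconv 1 (Or.inr rfl))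
  have I0 : Tendsto (fun n => ∫ ω, (Q' n 0 (Z ω) - Q 0 (Z ω)) ^ 2 ∂μ) atTop (nhds 0) :=
    hsqr _ (fun n => integral_nonneg fun ω => sq_nonneg _) (hQconv 0 (Or.inl rfl))
  -- integrability facts
  have hζsq : Integrable (fun ω => ζ ω ^ 2) μ := hζ2.integrable_sq
  have hΔgmeas : ∀ n, Measurable fun ω => (g' n (Z ω) - g (Z ω)) ^ 2 := fun n =>
    (((hg' n).comp hZ).sub (hg.comp hZ)).pow_const 2
  have hΔgbd : ∀ n, ∀ᵐ ω ∂μ, (g' n (Z ω) - g (Z ω)) ^ 2 ≤ 1 := by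
    intro n
    filter_upwards [hgbd, hg'bd n] with ω h1 h2
    nlinarith [h1.1, h1.2, h2.1, h2.2]
  have hΔgInt : ∀ n, Integrable (fun ω => (g' n (Z ω) - g (Z ω)) ^ 2) μ := by
    intro n
    refine (integrable_const (1 : ℝ)).mono' (hΔgmeas n).aestronglyMeasurable ?_
    filter_upwards [hΔgbd n] with ω h
    rw [Real.norm_eq_abs, abs_of_nonneg (sq_nonneg _)]
    exact h
  have hζΔg : ∀ n, Integrable (fun ω => ζ ω ^ 2 * (g' n (Z ω) - g (Z ω)) ^ 2) μ := by
    intro n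
    refine hζsq.mono' ((hζ.pow_const 2).mul (hΔgmeas n)).aestronglyMeasurable ?_
    filter_upwards [hΔgbd n] with ω h
    rw [Real.norm_eq_abs, abs_of_nonneg (by positivity)]
    nlinarith [sq_nonneg (ζ ω)]
  have hΔ1Int : ∀ n, Integrable (fun ω => (Q' n 1 (Z ω) - Q 1 (Z ω)) ^ 2) μ := fun n =>
    ((hQ'2 n 1 (Or.inr rfl)).sub (hQ2 1 (Or.inr rfl))).integrable_sq
  have hΔ0Int : ∀ n, Integrable (fun ω => (Q' n 0 (Z ω) - Q 0 (Z ω)) ^ 2) μ := fun n =>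
    ((hQ'2 n 0 (Or.inl rfl)).sub (hQ2 0 (Or.inl rfl))).integrable_sq
  -- the tower-property bound ∫ ζ² Δg² ≤ C ∫ Δg²
  have htower : ∀ n, ∫ ω, ζ ω ^ 2 * (g' n (Z ω) - g (Z ω)) ^ 2 ∂μ
      ≤ C * ∫ ω, (g' n (Z ω) - g (Z ω)) ^ 2 ∂μ := by
    intro n
    have hZm : Measurable[MeasurableSpace.comap Z inferInstance] Z :=
      measurable_iff_comap_le.mpr le_rfl
    have hhm : Measurable[MeasurableSpace.comap Z inferInstance]
        fun ω => (g' n (Z ω) - g (Z ω)) ^ 2 :=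
      (((hg' n).sub hg).pow_const 2).comp hZm
    have hmul : Integrable (fun ω => (g' n (Z ω) - g (Z ω)) ^ 2 * ζ ω ^ 2) μ :=
      (hζΔg n).congr (Eventually.of_forall fun ω => mul_comm _ _)
    have hpull :
        μ[(fun ω => (g' n (Z ω) - g (Z ω)) ^ 2) * (fun ω' => ζ ω' ^ 2) |
            MeasurableSpace.comap Z inferInstance]
          =ᵐ[μ] (fun ω => (g' n (Z ω) - g (Z ω)) ^ 2) *
            μ[(fun ω' => ζ ω' ^ 2) | MeasurableSpace.comap Z inferInstance] :=
      condExp_mul_of_stronglyMeasurable_left hhm.stronglyMeasurable hmul hζsq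
    have hcondInt : Integrable (μ[(fun ω' => ζ ω' ^ 2) |
        MeasurableSpace.comap Z inferInstance]) μ := integrable_condExp
    have hprodInt : Integrable (fun ω => (g' n (Z ω) - g (Z ω)) ^ 2 *
        (μ[(fun ω' => ζ ω' ^ 2) | MeasurableSpace.comap Z inferInstance]) ω) μ := by
      refine Integrable.bdd_mul (c := 1) hcondInt (hΔgmeas n).aestronglyMeasurable ?_
      filter_upwards [hΔgbd n] with ω h
      rw [Real.norm_eq_abs, abs_of_nonneg (sq_nonneg _)]
      exact h
    have e2 : ∫ ω, (g' n (Z ω) - g (Z ω)) ^ 2 * ζ ω ^ 2 ∂μ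
        = ∫ ω, (g' n (Z ω) - g (Z ω)) ^ 2 *
            (μ[(fun ω' => ζ ω' ^ 2) | MeasurableSpace.comap Z inferInstance]) ω ∂μ := by
      calc ∫ ω, (g' n (Z ω) - g (Z ω)) ^ 2 * ζ ω ^ 2 ∂μ
          = ∫ ω, (μ[(fun ω => (g' n (Z ω) - g (Z ω)) ^ 2) * (fun ω' => ζ ω' ^ 2) |
              MeasurableSpace.comap Z inferInstance]) ω ∂μ := (integral_condExp hm).symm
        _ = ∫ ω, (g' n (Z ω) - g (Z ω)) ^ 2 *
              (μ[(fun ω' => ζ ω' ^ 2) | MeasurableSpace.comap Z inferInstance]) ω ∂μ :=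
            integral_congr_ae hpull
    have e3 : ∫ ω, (g' n (Z ω) - g (Z ω)) ^ 2 *
          (μ[(fun ω' => ζ ω' ^ 2) | MeasurableSpace.comap Z inferInstance]) ω ∂μ
        ≤ ∫ ω, C * (g' n (Z ω) - g (Z ω)) ^ 2 ∂μ := by
      refine integral_mono_ae hprodInt ((hΔgInt n).const_mul C) ?_
      filter_upwards [hζvar] with ω h
      calc (g' n (Z ω) - g (Z ω)) ^ 2 *
            (μ[(fun ω' => ζ ω' ^ 2) | MeasurableSpace.comap Z inferInstance]) ω
          ≤ (g' n (Z ω) - g (Z ω)) ^ 2 * C := mul_le_mul_of_nonneg_left h (sq_nonneg _)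
        _ = C * (g' n (Z ω) - g (Z ω)) ^ 2 := mul_comm _ _
    calc ∫ ω, ζ ω ^ 2 * (g' n (Z ω) - g (Z ω)) ^ 2 ∂μ
        = ∫ ω, (g' n (Z ω) - g (Z ω)) ^ 2 * ζ ω ^ 2 ∂μ := by
          exact integral_congr_ae (Eventually.of_forall fun ω => mul_comm _ _)
      _ ≤ ∫ ω, C * (g' n (Z ω) - g (Z ω)) ^ 2 ∂μ := e2 ▸ e3
      _ = C * ∫ ω, (g' n (Z ω) - g (Z ω)) ^ 2 ∂μ := integral_const_mul _ _
  -- pointwise a.e. bound on the squared score difference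
  have hptw : ∀ n, ∀ᵐ ω ∂μ,
      ((T ω / g' n (Z ω) * (Y ω - Q' n 1 (Z ω))
          - (1 - T ω) / (1 - g' n (Z ω)) * (Y ω - Q' n 0 (Z ω))
          + (Q' n 1 (Z ω) - Q' n 0 (Z ω)) - ψ₀)
        - (T ω / g (Z ω) * (Y ω - Q 1 (Z ω))
          - (1 - T ω) / (1 - g (Z ω)) * (Y ω - Q 0 (Z ω))
          + (Q 1 (Z ω) - Q 0 (Z ω)) - ψ₀)) ^ 2
      ≤ 3 / ε ^ 4 * (ζ ω ^ 2 * (g' n (Z ω) - g (Z ω)) ^ 2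
          + (Q' n 1 (Z ω) - Q 1 (Z ω)) ^ 2 + (Q' n 0 (Z ω) - Q 0 (Z ω)) ^ 2) := by
    intro n
    filter_upwards [hgbd, hg'bd n] with ω hgω hg'ω
    have ha0 : (0:ℝ) < g (Z ω) := lt_of_lt_of_le hε hgω.1
    have ha'0 : (0:ℝ) < g' n (Z ω) := lt_of_lt_of_le hε hg'ω.1
    have hb0 : (0:ℝ) < 1 - g (Z ω) := by linarith [hgω.2]
    have hb'0 : (0:ℝ) < 1 - g' n (Z ω) := by linarith [hg'ω.2]
    rcases hTbin ω with h0 | h1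
    · -- T ω = 0
      have hY' : Y ω = Q 0 (Z ω) + ζ ω := by rw [hmodel ω, h0]
      have heq : (T ω / g' n (Z ω) * (Y ω - Q' n 1 (Z ω))
          - (1 - T ω) / (1 - g' n (Z ω)) * (Y ω - Q' n 0 (Z ω))
          + (Q' n 1 (Z ω) - Q' n 0 (Z ω)) - ψ₀)
        - (T ω / g (Z ω) * (Y ω - Q 1 (Z ω))
          - (1 - T ω) / (1 - g (Z ω)) * (Y ω - Q 0 (Z ω))
          + (Q 1 (Z ω) - Q 0 (Z ω)) - ψ₀)
        = (-ζ ω) * ((1 - g (Z ω)) - (1 - g' n (Z ω))) / ((1 - g (Z ω)) * (1 - g' n (Z ω)))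
          + (-(Q' n 0 (Z ω) - Q 0 (Z ω))) * (1 - 1 / (1 - g' n (Z ω)))
          - (-(Q' n 1 (Z ω) - Q 1 (Z ω))) := by
        rw [h0, hY']
        field_simp
        ring
      rw [heq]
      calc _ ≤ 3 / ε ^ 4 * ((-ζ ω) ^ 2 * ((1 - g' n (Z ω)) - (1 - g (Z ω))) ^ 2
            + (-(Q' n 0 (Z ω) - Q 0 (Z ω))) ^ 2 + (-(Q' n 1 (Z ω) - Q 1 (Z ω))) ^ 2) :=
          stmt15_sq_bound3 ε (-ζ ω) (1 - g (Z ω)) (1 - g' n (Z ω)) _ _ hε hε2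
            (by linarith [hgω.2]) (by linarith [hgω.1])
            (by linarith [hg'ω.2]) (by linarith [hg'ω.1])
        _ = 3 / ε ^ 4 * (ζ ω ^ 2 * (g' n (Z ω) - g (Z ω)) ^ 2
            + (Q' n 1 (Z ω) - Q 1 (Z ω)) ^ 2 + (Q' n 0 (Z ω) - Q 0 (Z ω)) ^ 2) := by ring
    · -- T ω = 1
      have hY' : Y ω = Q 1 (Z ω) + ζ ω := by rw [hmodel ω, h1]
      have heq : (T ω / g' n (Z ω) * (Y ω - Q' n 1 (Z ω))
          - (1 - T ω) / (1 - g' n (Z ω)) * (Y ω - Q' n 0 (Z ω))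
          + (Q' n 1 (Z ω) - Q' n 0 (Z ω)) - ψ₀)
        - (T ω / g (Z ω) * (Y ω - Q 1 (Z ω))
          - (1 - T ω) / (1 - g (Z ω)) * (Y ω - Q 0 (Z ω))
          + (Q 1 (Z ω) - Q 0 (Z ω)) - ψ₀)
        = ζ ω * (g (Z ω) - g' n (Z ω)) / (g (Z ω) * g' n (Z ω))
          + (Q' n 1 (Z ω) - Q 1 (Z ω)) * (1 - 1 / g' n (Z ω))
          - (Q' n 0 (Z ω) - Q 0 (Z ω)) := by
        rw [h1, hY']
        field_simp
        ring
      rw [heq]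
      calc _ ≤ 3 / ε ^ 4 * (ζ ω ^ 2 * (g' n (Z ω) - g (Z ω)) ^ 2
            + (Q' n 1 (Z ω) - Q 1 (Z ω)) ^ 2 + (Q' n 0 (Z ω) - Q 0 (Z ω)) ^ 2) :=
          stmt15_sq_bound3 ε (ζ ω) (g (Z ω)) (g' n (Z ω)) _ _ hε hε2
            hgω.1 hgω.2 hg'ω.1 hg'ω.2
        _ = _ := rfl
  -- integral comparison
  have hIle : ∀ n, (∫ ω,
        ((T ω / g' n (Z ω) * (Y ω - Q' n 1 (Z ω))
            - (1 - T ω) / (1 - g' n (Z ω)) * (Y ω - Q' n 0 (Z ω))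
            + (Q' n 1 (Z ω) - Q' n 0 (Z ω)) - ψ₀)
          - (T ω / g (Z ω) * (Y ω - Q 1 (Z ω))
            - (1 - T ω) / (1 - g (Z ω)) * (Y ω - Q 0 (Z ω))
            + (Q 1 (Z ω) - Q 0 (Z ω)) - ψ₀)) ^ 2 ∂μ)
      ≤ 3 / ε ^ 4 * (C * (∫ ω, (g' n (Z ω) - g (Z ω)) ^ 2 ∂μ)
          + (∫ ω, (Q' n 1 (Z ω) - Q 1 (Z ω)) ^ 2 ∂μ)
          + (∫ ω, (Q' n 0 (Z ω) - Q 0 (Z ω)) ^ 2 ∂μ)) := by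
    intro n
    have hbig : Integrable (fun ω => 3 / ε ^ 4 * (ζ ω ^ 2 * (g' n (Z ω) - g (Z ω)) ^ 2
        + (Q' n 1 (Z ω) - Q 1 (Z ω)) ^ 2 + (Q' n 0 (Z ω) - Q 0 (Z ω)) ^ 2)) μ :=
      (((hζΔg n).add (hΔ1Int n)).add (hΔ0Int n)).const_mul _
    have h1 := integral_mono_of_nonneg
      (Eventually.of_forall fun ω => sq_nonneg _) hbig (hptw n)
    have h2 : ∫ ω, 3 / ε ^ 4 * (ζ ω ^ 2 * (g' n (Z ω) - g (Z ω)) ^ 2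
          + (Q' n 1 (Z ω) - Q 1 (Z ω)) ^ 2 + (Q' n 0 (Z ω) - Q 0 (Z ω)) ^ 2) ∂μ
        = 3 / ε ^ 4 * ((∫ ω, ζ ω ^ 2 * (g' n (Z ω) - g (Z ω)) ^ 2 ∂μ)
          + (∫ ω, (Q' n 1 (Z ω) - Q 1 (Z ω)) ^ 2 ∂μ)
          + (∫ ω, (Q' n 0 (Z ω) - Q 0 (Z ω)) ^ 2 ∂μ)) := by
      have hadd : Integrable (fun ω => ζ ω ^ 2 * (g' n (Z ω) - g (Z ω)) ^ 2
          + (Q' n 1 (Z ω) - Q 1 (Z ω)) ^ 2) μ := (hζΔg n).add (hΔ1Int n)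
      rw [integral_const_mul, integral_add hadd (hΔ0Int n),
        integral_add (hζΔg n) (hΔ1Int n)]
    have h3 : 3 / ε ^ 4 * ((∫ ω, ζ ω ^ 2 * (g' n (Z ω) - g (Z ω)) ^ 2 ∂μ)
          + (∫ ω, (Q' n 1 (Z ω) - Q 1 (Z ω)) ^ 2 ∂μ)
          + (∫ ω, (Q' n 0 (Z ω) - Q 0 (Z ω)) ^ 2 ∂μ))
        ≤ 3 / ε ^ 4 * (C * (∫ ω, (g' n (Z ω) - g (Z ω)) ^ 2 ∂μ)
          + (∫ ω, (Q' n 1 (Z ω) - Q 1 (Z ω)) ^ 2 ∂μ)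
          + (∫ ω, (Q' n 0 (Z ω) - Q 0 (Z ω)) ^ 2 ∂μ)) := by
      have h4 := htower n
      have h5 : (0:ℝ) ≤ 3 / ε ^ 4 := by positivity
      apply mul_le_mul_of_nonneg_left _ h5
      linarith
    calc _ ≤ _ := h1
      _ = _ := h2
      _ ≤ _ := h3
  -- the bound sequence tends to 0
  have hb : Tendsto (fun n => 3 / ε ^ 4 * (C * (∫ ω, (g' n (Z ω) - g (Z ω)) ^ 2 ∂μ)
      + (∫ ω, (Q' n 1 (Z ω) - Q 1 (Z ω)) ^ 2 ∂μ)
      + (∫ ω, (Q' n 0 (Z ω) - Q 0 (Z ω)) ^ 2 ∂μ))) atTop (nhds 0) := by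
    have := (((Ig.const_mul C).add I1).add I0).const_mul (3 / ε ^ 4)
    simpa using this
  -- squeeze
  have hI : Tendsto (fun n => ∫ ω,
      ((T ω / g' n (Z ω) * (Y ω - Q' n 1 (Z ω))
          - (1 - T ω) / (1 - g' n (Z ω)) * (Y ω - Q' n 0 (Z ω))
          + (Q' n 1 (Z ω) - Q' n 0 (Z ω)) - ψ₀)
        - (T ω / g (Z ω) * (Y ω - Q 1 (Z ω))
          - (1 - T ω) / (1 - g (Z ω)) * (Y ω - Q 0 (Z ω))
          + (Q 1 (Z ω) - Q 0 (Z ω)) - ψ₀)) ^ 2 ∂μ) atTop (nhds 0) :=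
    tendsto_of_tendsto_of_tendsto_of_le_of_le tendsto_const_nhds hb
      (fun n => integral_nonneg fun ω => sq_nonneg _) hIle
  have hfinal := (Real.continuous_sqrt.tendsto 0).comp hI
  simpa [Function.comp_def, Real.sqrt_zero] using hfinal
end

section
/- Propensity-score sufficiency (Rosenbaum–Rubin): if Y(1), Y(0) ⊥ T | Z (unconfoundedness given Z), then Y(1), Y(0) ⊥ T | g(Z), where g(Z) = P(T=1|Z); in particular T ⊥ Z | g(Z). -/
open MeasureTheory ProbabilityTheory

/-!
Conditional independence given a σ-algebra `m` descends to any coarser `m' ≤ m` as soon as the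
conditional law of the second variable given `m` is already `m'`-measurable: by the tower property
and the pull-out property, `P(A ∩ B | m') = E[P(A | m) P(B | m) | m'] = P(A | m') P(B | m)`, and
`P(B | m') = P(B | m)`. For a binary treatment `T` the conditional law given `Z` is determined by
the propensity score `E[T | Z] = g(Z)`, which is `g(Z)`-measurable. The balancing property is the
special case `W = Z` of the first claim, since `Z ⟂ T | Z` holds trivially.
-/

section Coarsening

variable {Ω : Type*} {m' m mΩ : MeasurableSpace Ω} [StandardBorelSpace Ω]
  {μ : @Measure Ω mΩ} [IsFiniteMeasure μ]

theorem CondIndepSet.of_le_of_aestronglyMeasurable_condExp (hm' : m' ≤ m) (hm : m ≤ mΩ)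
    {A B : Set Ω} (hA : MeasurableSet A) (hB : MeasurableSet B)
    (hAB : CondIndepSet m hm A B μ) (hBm' : AEStronglyMeasurable[m'] (μ⟦B | m⟧) μ) :
    CondIndepSet m' (hm'.trans hm) A B μ := by
  rw [condIndepSet_iff _ _ _ _ hA hB] at hAB ⊢
  have hB' : μ⟦B | m'⟧ =ᵐ[μ] μ⟦B | m⟧ :=
    (condExp_condExp_of_le hm' hm).symm.trans
      (condExp_of_aestronglyMeasurable' (hm'.trans hm) hBm' integrable_condExp)
  calc μ⟦A ∩ B | m'⟧
      =ᵐ[μ] μ[μ⟦A ∩ B | m⟧ | m'] := (condExp_condExp_of_le hm' hm).symm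
    _ =ᵐ[μ] μ[μ⟦A | m⟧ * μ⟦B | m⟧ | m'] := condExp_congr_ae hAB
    _ =ᵐ[μ] μ[μ⟦A | m⟧ | m'] * μ⟦B | m⟧ :=
        condExp_mul_of_aestronglyMeasurable_right hBm'
          (integrable_condExp.congr hAB) integrable_condExp
    _ =ᵐ[μ] μ⟦A | m'⟧ * μ⟦B | m'⟧ :=
        (condExp_condExp_of_le hm' hm).mul hB'.symm

theorem CondIndepFun.of_le_of_aestronglyMeasurable_condExp {β γ : Type*} [MeasurableSpace β]
    [MeasurableSpace γ] (hm' : m' ≤ m) (hm : m ≤ mΩ) {W : Ω → β} {T : Ω → γ}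
    (hW : Measurable W) (hT : Measurable T) (hWT : CondIndepFun m hm W T μ)
    (hlaw : ∀ t, MeasurableSet t → AEStronglyMeasurable[m'] (μ⟦T ⁻¹' t | m⟧) μ) :
    CondIndepFun m' (hm'.trans hm) W T μ := by
  rw [condIndepFun_iff_condIndepSet_preimage hW hT] at hWT ⊢
  intro s t hs ht
  exact CondIndepSet.of_le_of_aestronglyMeasurable_condExp hm' hm (hW hs) (hT ht) (hWT s t hs ht)
    (hlaw t ht)

end Coarsening

section Binary

variable {Ω : Type*} {T : Ω → ℝ}

theorem indicator_preimage_eq_of_binary (hTbin : ∀ ω, T ω = 0 ∨ T ω = 1) (t : Set ℝ) :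
    (T ⁻¹' t).indicator (fun _ ↦ (1 : ℝ)) =
      fun ω ↦ t.indicator 1 0 + (t.indicator 1 1 - t.indicator 1 0) * T ω := by
  funext ω
  show t.indicator 1 (T ω) = _
  rcases hTbin ω with h | h <;> simp [h]

theorem aestronglyMeasurable_condExp_indicator_preimage_of_binary {m' m mΩ : MeasurableSpace Ω}
    {μ : @Measure Ω mΩ} [IsFiniteMeasure μ] (hm : m ≤ mΩ) (hT : Measurable T)
    (hTbin : ∀ ω, T ω = 0 ∨ T ω = 1) (hTm' : AEStronglyMeasurable[m'] (μ[T | m]) μ)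
    (t : Set ℝ) : AEStronglyMeasurable[m'] (μ⟦T ⁻¹' t | m⟧) μ := by
  set a : ℝ := t.indicator 1 0
  set b : ℝ := t.indicator 1 1 - a
  have hTint : Integrable T μ :=
    .of_bound hT.aestronglyMeasurable 1 <| ae_of_all _ fun ω ↦ by
      rcases hTbin ω with h | h <;> simp [h]
  have haffine : μ[fun ω ↦ a + b * T ω | m] =ᵐ[μ] fun ω ↦ a + b * μ[T | m] ω := by
    calc μ[fun ω ↦ a + b * T ω | m]
        =ᵐ[μ] μ[fun _ ↦ a | m] + μ[b • T | m] := condExp_add (integrable_const a) (hTint.smul b) m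
      _ =ᵐ[μ] (fun _ ↦ a) + b • μ[T | m] := by
          rw [condExp_const hm]; exact Filter.EventuallyEq.rfl.add (condExp_smul b T m)
  rw [indicator_preimage_eq_of_binary hTbin t]
  exact (aestronglyMeasurable_const.add (hTm'.const_mul b)).congr haffine.symm

end Binary

theorem stmt17_general
    {Ω : Type*} [MeasurableSpace Ω] [StandardBorelSpace Ω]
    (μ : Measure Ω) [IsProbabilityMeasure μ]
    {𝒵 : Type*} [MeasurableSpace 𝒵]
    (Y0 Y1 T : Ω → ℝ) (Z : Ω → 𝒵)
    (hY0 : Measurable Y0) (hY1 : Measurable Y1) (hT : Measurable T) (hZ : Measurable Z)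
    (hTbin : ∀ ω, T ω = 0 ∨ T ω = 1)
    -- the propensity score g(Z) = P(T=1|Z)
    (g : 𝒵 → ℝ) (hg : Measurable g)
    (hgdef : (fun ω => g (Z ω)) =ᵐ[μ] μ[T | MeasurableSpace.comap Z inferInstance])
    -- unconfoundedness given Z
    (hunconf : CondIndepFun (MeasurableSpace.comap Z inferInstance) hZ.comap_le
      (fun ω => (Y0 ω, Y1 ω)) T μ) :
    CondIndepFun (MeasurableSpace.comap (fun ω => g (Z ω)) inferInstance)
        ((hg.comp hZ).comap_le) (fun ω => (Y0 ω, Y1 ω)) T μ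
    ∧ CondIndepFun (MeasurableSpace.comap (fun ω => g (Z ω)) inferInstance)
        ((hg.comp hZ).comap_le) T Z μ := by
  have hle : MeasurableSpace.comap (fun ω => g (Z ω)) inferInstance ≤
      MeasurableSpace.comap Z inferInstance :=
    (hg.comp (comap_measurable Z)).comap_le
  have hscore : AEStronglyMeasurable[MeasurableSpace.comap (fun ω => g (Z ω)) inferInstance]
      (μ[T | MeasurableSpace.comap Z inferInstance]) μ :=
    (comap_measurable _).aestronglyMeasurable.congr hgdef
  have hlaw t (_ : MeasurableSet t) :=
    aestronglyMeasurable_condExp_indicator_preimage_of_binary hZ.comap_le hT hTbin hscore t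
  exact ⟨CondIndepFun.of_le_of_aestronglyMeasurable_condExp hle hZ.comap_le (hY0.prodMk hY1) hT
      hunconf hlaw,
    (CondIndepFun.of_le_of_aestronglyMeasurable_condExp hle hZ.comap_le hZ hT
      (condIndepFun_self_left hT hZ) hlaw).symm⟩

/-- Propensity-score sufficiency (Rosenbaum–Rubin): if the potential outcomes
`(Y0, Y1)` are conditionally independent of the treatment `T` given `Z`, then they are
conditionally independent of `T` given the propensity score `g(Z) = P(T=1|Z)`; in particular the
balancing property `T ⟂ Z | g(Z)` holds. -/
theorem stmt17
    {Ω : Type*} [MeasurableSpace Ω] [StandardBorelSpace Ω]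
    (μ : Measure Ω) [IsProbabilityMeasure μ]
    {𝒵 : Type*} [MeasurableSpace 𝒵] [StandardBorelSpace 𝒵]
    (Y Y0 Y1 T : Ω → ℝ) (Z : Ω → 𝒵)
    (hY0 : Measurable Y0) (hY1 : Measurable Y1) (hT : Measurable T) (hZ : Measurable Z)
    (hTbin : ∀ ω, T ω = 0 ∨ T ω = 1)
    (hconsist : ∀ ω, Y ω = T ω * Y1 ω + (1 - T ω) * Y0 ω)
    -- the propensity score g(Z) = P(T=1|Z)
    (g : 𝒵 → ℝ) (hg : Measurable g)
    (hgdef : (fun ω => g (Z ω)) =ᵐ[μ] μ[T | MeasurableSpace.comap Z inferInstance])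
    (hpos : ∀ᵐ ω ∂μ, 0 < g (Z ω) ∧ g (Z ω) < 1)
    -- unconfoundedness given Z
    (hunconf : CondIndepFun (MeasurableSpace.comap Z inferInstance) hZ.comap_le
      (fun ω => (Y0 ω, Y1 ω)) T μ) :
    CondIndepFun (MeasurableSpace.comap (fun ω => g (Z ω)) inferInstance)
        ((hg.comp hZ).comap_le) (fun ω => (Y0 ω, Y1 ω)) T μ
    ∧ CondIndepFun (MeasurableSpace.comap (fun ω => g (Z ω)) inferInstance)
        ((hg.comp hZ).comap_le) T Z μ :=
  stmt17_general μ Y0 Y1 T Z hY0 hY1 hT hZ hTbin g hg hgdef hunconf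
end
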